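/- arXiv:2209.15599 — 9 statements merged into one kernel-verified Lean document; each statement's English description precedes it below -/
import Mathlib

section
/- Let λ = α + γi be a complex number with α > 0 and γ > 0, let β = √(α² + γ²), and let φ ∈ (0, π/2) satisfy cos φ = α/β. Let n ≥ 2 be the integer with nφ < π ≤ (n+1)φ. Then the polynomial g(x) = Σ_{k=0}^{n-1} β^{n-1-k} sin((k+1)φ) x^k has all coefficients positive, and the product (x² - 2αx + β²)·g(x) has all coefficients nonnegative with positive leading and constant coefficients. -/
/-!
With `α = β cos φ`, the coefficients `β ^ (n - 1 - k) sin ((k + 1) φ)` of `g` satisfy the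
three-term recurrence `sin ((k - 1) φ) - 2 cos φ sin (k φ) + sin ((k + 1) φ) = 0`, so multiplying
by `X ^ 2 - 2 β cos φ X + β ^ 2` telescopes to the trinomial
`β ^ (n + 1) sin φ - β sin ((n + 1) φ) X ^ n + sin (n φ) X ^ (n + 1)`.
The choice of `n` puts `(k + 1) φ` and `n φ` in `(0, π)` and `(n + 1) φ` in `[π, 2π)`,
which gives the signs.
-/

open Polynomial Real

noncomputable def sinPoly (β φ : ℝ) (n : ℕ) : ℝ[X] :=
  ∑ k ∈ Finset.range n, C (β ^ (n - 1 - k) * sin ((k + 1) * φ)) * X ^ k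

section sinPoly

variable (β φ : ℝ)

theorem coeff_sinPoly (n k : ℕ) :
    (sinPoly β φ n).coeff k = if k < n then β ^ (n - 1 - k) * sin ((k + 1) * φ) else 0 := by
  simp only [sinPoly, finsetSum_coeff, coeff_C_mul, coeff_X_pow, mul_ite, mul_one, mul_zero,
    Finset.sum_ite_eq, Finset.mem_range]

theorem sinPoly_succ (n : ℕ) :
    sinPoly β φ (n + 1) = C β * sinPoly β φ n + C (sin ((n + 1) * φ)) * X ^ n := by
  rw [sinPoly, Finset.sum_range_succ, sinPoly, Finset.mul_sum, Nat.add_sub_cancel, Nat.sub_self,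
    pow_zero, one_mul]
  congr 1
  refine Finset.sum_congr rfl fun k hk => ?_
  have hpow : β ^ (n - k) = β * β ^ (n - 1 - k) := by
    rw [← pow_succ']
    congr 1
    have := Finset.mem_range.mp hk
    omega
  simp only [hpow, C_mul]
  ring

theorem quadratic_mul_sinPoly (n : ℕ) :
    (X ^ 2 - C (2 * β * cos φ) * X + C (β ^ 2)) * sinPoly β φ n =
      trinomial 0 n (n + 1) (β ^ (n + 1) * sin φ) (-(β * sin ((n + 1) * φ))) (sin (n * φ)) := by
  induction n with
  | zero => simp [sinPoly, trinomial_def]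
  | succ n ih =>
    have hrec : sin ((n + 1 + 1) * φ) = 2 * cos φ * sin ((n + 1) * φ) - sin (n * φ) := by
      rw [show (n + 1 + 1) * φ = (n + 1) * φ + φ by ring,
        show n * φ = (n + 1) * φ - φ by ring, sin_add, sin_sub]
      ring
    rw [sinPoly_succ, mul_add, mul_left_comm, ih]
    simp only [trinomial_def, hrec, Nat.cast_add, Nat.cast_one, pow_zero, mul_one, C_mul, C_sub,
      C_neg, C_pow, C_ofNat]
    ring

end sinPoly

theorem Polynomial.trinomial_coeff_nonneg {R : Type*} [Semiring R] [PartialOrder R]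
    [IsOrderedRing R] (k m n : ℕ) {u v w : R} (hu : 0 ≤ u) (hv : 0 ≤ v) (hw : 0 ≤ w) (j : ℕ) :
    0 ≤ (trinomial k m n u v w).coeff j := by
  simp only [trinomial_def, coeff_add, coeff_C_mul_X_pow]
  split_ifs <;> positivity

theorem stmt3_general (α γ β φ : ℝ) (hα : 0 < α)
    (hβ : β = Real.sqrt (α ^ 2 + γ ^ 2))
    (hφ0 : 0 < φ) (hcos : Real.cos φ = α / β)
    (n : ℕ) (hn : 2 ≤ n) (hlt : (n : ℝ) * φ < Real.pi) (hle : Real.pi ≤ ((n : ℝ) + 1) * φ)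
    (g : Polynomial ℝ)
    (hg : g = ∑ k ∈ Finset.range n, C (β ^ (n - 1 - k) * Real.sin (((k : ℝ) + 1) * φ)) * X ^ k) :
    (∀ k ≤ n - 1, 0 < g.coeff k) ∧
    (∀ k, 0 ≤ ((X ^ 2 - C (2 * α) * X + C (β ^ 2)) * g).coeff k) ∧
    0 < ((X ^ 2 - C (2 * α) * X + C (β ^ 2)) * g).coeff 0 ∧
    0 < ((X ^ 2 - C (2 * α) * X + C (β ^ 2)) * g).leadingCoeff := by
  have hβpos : 0 < β := hβ ▸ sqrt_pos.mpr (by positivity)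
  have hα_eq : α = β * cos φ := by rw [hcos]; field_simp
  have hφ_le : φ ≤ n * φ := le_mul_of_one_le_left hφ0.le (by exact_mod_cast (by omega : 1 ≤ n))
  have hsin_pos : ∀ k < n, 0 < sin ((k + 1) * φ) := fun k hk =>
    sin_pos_of_pos_of_lt_pi (by positivity)
      ((mul_le_mul_of_nonneg_right (by exact_mod_cast hk) hφ0.le).trans_lt hlt)
  have hconst : 0 < β ^ (n + 1) * sin φ :=
    mul_pos (pow_pos hβpos _) (by simpa using hsin_pos 0 (by omega))
  have hsin_n : 0 < sin (n * φ) := sin_pos_of_pos_of_lt_pi (by positivity) hlt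
  have hsin_succ : sin ((n + 1) * φ) ≤ 0 := by
    rw [← sin_sub_two_pi]
    exact sin_nonpos_of_nonpos_of_neg_pi_le (by linarith) (by linarith)
  have hp : (X ^ 2 - C (2 * α) * X + C (β ^ 2)) * g =
      trinomial 0 n (n + 1) (β ^ (n + 1) * sin φ) (-(β * sin ((n + 1) * φ))) (sin (n * φ)) := by
    rw [hg, hα_eq, ← mul_assoc]
    exact quadratic_mul_sinPoly β φ n
  refine ⟨fun k hk => ?_, fun k => ?_, ?_, ?_⟩
  · rw [show g = sinPoly β φ n from hg, coeff_sinPoly, if_pos (by omega)]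
    exact mul_pos (pow_pos hβpos _) (hsin_pos k (by omega))
  · rw [hp]
    exact trinomial_coeff_nonneg _ _ _ hconst.le
      (neg_nonneg.mpr (mul_nonpos_of_nonneg_of_nonpos hβpos.le hsin_succ)) hsin_n.le k
  · rwa [hp, trinomial_trailing_coeff' (by omega) (by omega)]
  · rwa [hp, trinomial_leadingCoeff (by omega) (by omega) hsin_n.ne']

theorem stmt3 (α γ β φ : ℝ) (hα : 0 < α) (hγ : 0 < γ)
    (hβ : β = Real.sqrt (α ^ 2 + γ ^ 2))
    (hφ0 : 0 < φ) (hφ1 : φ < Real.pi / 2) (hcos : Real.cos φ = α / β)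
    (n : ℕ) (hn : 2 ≤ n) (hlt : (n : ℝ) * φ < Real.pi) (hle : Real.pi ≤ ((n : ℝ) + 1) * φ)
    (g : Polynomial ℝ)
    (hg : g = ∑ k ∈ Finset.range n, C (β ^ (n - 1 - k) * Real.sin (((k : ℝ) + 1) * φ)) * X ^ k) :
    (∀ k ≤ n - 1, 0 < g.coeff k) ∧
    (∀ k, 0 ≤ ((X ^ 2 - C (2 * α) * X + C (β ^ 2)) * g).coeff k) ∧
    0 < ((X ^ 2 - C (2 * α) * X + C (β ^ 2)) * g).coeff 0 ∧
    0 < ((X ^ 2 - C (2 * α) * X + C (β ^ 2)) * g).leadingCoeff :=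
  stmt3_general α γ β φ hα hβ hφ0 hcos n hn hlt hle g hg
end

section
/- For every monic quadratic real polynomial f(x) = x² - 2αx + β² with no real roots (i.e., β² > α²) and β > 0, there exists a nonzero polynomial g(x) with nonnegative coefficients such that f(x)·g(x) has nonnegative coefficients. -/
/-!
Multiplying `f = X² - 2αX + β²` by `f(-X) = X² + 2αX + β²` gives `f₁(X²)` for the quadratic
`f₁ = X² - 2α₁X + β₁²` with `α₁ = 2α² - β²`, `β₁ = β²`, so a nonnegative multiple of `f₁` yields
one of `f`. In terms of `t = α / β` this step is `t ↦ 2t² - 1`, and `1 - t` grows at least by the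
factor `3/2` while `t > 1/2`. So if `β ≤ 2 (3/2)ⁿ (β - α)`, then `2α ≤ β` holds after at most `n`
steps, and then `(X + β) f` already has nonnegative coefficients.
-/

open Polynomial

namespace Polynomial

section OrderedSemiring

variable {R : Type*} [CommSemiring R] [PartialOrder R]

def CoeffsNonneg (p : R[X]) : Prop := ∀ k, 0 ≤ p.coeff k

def HasNonnegMultiple (p : R[X]) : Prop :=
  ∃ g : R[X], g ≠ 0 ∧ g.CoeffsNonneg ∧ (p * g).CoeffsNonneg

lemma CoeffsNonneg.mul [IsOrderedRing R] {p q : R[X]} (hp : p.CoeffsNonneg)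
    (hq : q.CoeffsNonneg) : (p * q).CoeffsNonneg := fun k => by
  rw [coeff_mul]
  exact Finset.sum_nonneg fun _ _ => mul_nonneg (hp _) (hq _)

lemma CoeffsNonneg.expand {p : R[X]} (hp : p.CoeffsNonneg) {n : ℕ} (hn : 0 < n) :
    (expand R n p).CoeffsNonneg := fun k => by
  rw [coeff_expand hn]
  split_ifs
  · exact hp _
  · exact le_rfl

lemma HasNonnegMultiple.of_mul_eq_expand [IsOrderedRing R] [NoZeroDivisors R]
    {p q r : R[X]} {n : ℕ}
    (hr : r.HasNonnegMultiple) (hq : q ≠ 0) (hq_nonneg : q.CoeffsNonneg) (hn : 0 < n)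
    (h : p * q = expand R n r) : p.HasNonnegMultiple := by
  obtain ⟨g, hg, hg_nonneg, hrg⟩ := hr
  refine ⟨q * expand R n g, mul_ne_zero hq ((expand_ne_zero hn).mpr hg),
    hq_nonneg.mul (hg_nonneg.expand hn), ?_⟩
  rw [← mul_assoc, h, ← map_mul]
  exact hrg.expand hn

end OrderedSemiring

lemma quadratic_mul_reflect_eq_expand {R : Type*} [CommRing R] (a b : R) :
    (X ^ 2 - C (2 * a) * X + C (b ^ 2)) * (X ^ 2 + C (2 * a) * X + C (b ^ 2)) =
      expand R 2 (X ^ 2 - C (2 * (2 * a ^ 2 - b ^ 2)) * X + C ((b ^ 2) ^ 2)) := by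
  simp only [map_add, map_sub, map_mul, map_pow, expand_X, expand_C, map_ofNat]
  ring

section OrderedField

variable {K : Type*} [Field K] [LinearOrder K] [IsStrictOrderedRing K]

lemma hasNonnegMultiple_quadratic_of_two_mul_le {α β : K} (hβ : 0 ≤ β) (h : 2 * α ≤ β) :
    (X ^ 2 - C (2 * α) * X + C (β ^ 2)).HasNonnegMultiple := by
  refine ⟨X + C β, X_add_C_ne_zero β, ?_, ?_⟩
  · rintro (_ | _ | k) <;> simp [coeff_X, coeff_C, hβ]
  · have hproduct : (X ^ 2 - C (2 * α) * X + C (β ^ 2)) * (X + C β) =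
        C (β ^ 3) + C (β * (β - 2 * α)) * X + C (β - 2 * α) * X ^ 2 + X ^ 3 := by
      simp only [C_mul, C_sub, C_pow, map_ofNat]
      ring
    have hβα : 0 ≤ β - 2 * α := by linarith
    rw [hproduct]
    rintro (_ | _ | _ | _ | k) <;>
      simp [coeff_X, coeff_C, coeff_X_pow, -map_pow, -map_mul, -map_sub, hβ, hβα,
        mul_nonneg hβ hβα]

lemma hasNonnegMultiple_quadratic_of_le_pow (n : ℕ) {α β : K} (hβ : 0 < β)
    (h : β ≤ 2 * (3 / 2) ^ n * (β - α)) :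
    (X ^ 2 - C (2 * α) * X + C (β ^ 2)).HasNonnegMultiple := by
  induction n generalizing α β with
  | zero => exact hasNonnegMultiple_quadratic_of_two_mul_le hβ.le (by linarith)
  | succ n ih =>
    rcases le_or_gt (2 * α) β with hαβ | hαβ
    · exact hasNonnegMultiple_quadratic_of_two_mul_le hβ.le hαβ
    have hα : 0 < α := by linarith
    -- `(3/2) β (β - α) ≤ 2 (β - α) (β + α)` since `α > 0`
    have h_squared : β ^ 2 ≤ 2 * (3 / 2) ^ n * (β ^ 2 - (2 * α ^ 2 - β ^ 2)) := by
      have hpow : (0 : K) < (3 / 2) ^ n := by positivity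
      rw [pow_succ] at h
      nlinarith [mul_le_mul_of_nonneg_left h hβ.le, mul_pos hpow hα, mul_pos hpow hβ]
    refine (ih (pow_pos hβ 2) h_squared).of_mul_eq_expand ?_ ?_ two_pos
      (quadratic_mul_reflect_eq_expand α β)
    · exact ne_of_apply_ne (eval 0) (by simpa using hβ.ne')
    · rintro (_ | _ | _ | k) <;>
        simp [coeff_X, coeff_C, coeff_X_pow, -map_pow, -map_mul, hα.le, sq_nonneg]

end OrderedField

end Polynomial

theorem stmt4_general (α β : ℝ) (hroots : α ^ 2 < β ^ 2) :
    ∃ g : Polynomial ℝ, g ≠ 0 ∧ (∀ k, 0 ≤ g.coeff k) ∧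
      ∀ k, 0 ≤ ((X ^ 2 - C (2 * α) * X + C (β ^ 2)) * g).coeff k := by
  have hαβ : |α| < |β| := sq_lt_sq.mp hroots
  have hα : α < |β| := (le_abs_self α).trans_lt hαβ
  have hβ : 0 < |β| := (abs_nonneg α).trans_lt hαβ
  obtain ⟨n, hn⟩ :=
    pow_unbounded_of_one_lt (|β| / (2 * (|β| - α))) (by norm_num : (1 : ℝ) < 3 / 2)
  rw [div_lt_iff₀ (by linarith)] at hn
  rw [← sq_abs β]
  exact hasNonnegMultiple_quadratic_of_le_pow n hβ (by linarith)

theorem stmt4 (α β : ℝ) (hβ : 0 < β) (hroots : α ^ 2 < β ^ 2) :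
    ∃ g : Polynomial ℝ, g ≠ 0 ∧ (∀ k, 0 ≤ g.coeff k) ∧
      ∀ k, 0 ≤ ((X ^ 2 - C (2 * α) * X + C (β ^ 2)) * g).coeff k :=
  stmt4_general α β hroots
end

section
/- Let F be a monic real polynomial with F(x) > 0 for all x > 0. Then there exists a nonzero polynomial G with nonnegative coefficients such that the product F·G has all coefficients nonnegative. -/
/-!
Over `ℝ` a monic polynomial is a product of monic irreducible factors `X + a` and
`X ^ 2 + b X + c` with `b ^ 2 < 4 c`. Positivity of `F` on `(0, ∞)` forces `a ≥ 0`, so the linear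
factors already have nonnegative coefficients, and multipliers of the factors multiply.
For a quadratic factor take `G = (X + 1) ^ n`: the coefficient of `X ^ (j + 2)` in the product is
`C(n, j) + b C(n, j + 1) + c C(n, j + 2)`, which after multiplying by `(u + 1)(j + 2) / C(n, j + 1)`
(where `n = j + 1 + u`) becomes a quadratic polynomial in `j, u` whose leading form
`j ^ 2 + b j u + c u ^ 2` is positive definite; hence it is nonnegative once `n` is large.
-/

open Filter

namespace Polynomial

section OrderedSemiring

variable {R : Type*} [CommSemiring R] [PartialOrder R]

def HasPoincareMultiplier (F : R[X]) : Prop :=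
  ∃ G : R[X], G ≠ 0 ∧ (∀ k, 0 ≤ G.coeff k) ∧ ∀ k, 0 ≤ (F * G).coeff k

variable [IsOrderedRing R] {p q : R[X]}

theorem coeff_one_nonneg (k : ℕ) : 0 ≤ (1 : R[X]).coeff k := by
  rw [coeff_one]
  split_ifs <;> simp

theorem coeff_mul_nonneg (hp : ∀ k, 0 ≤ p.coeff k) (hq : ∀ k, 0 ≤ q.coeff k) (k : ℕ) :
    0 ≤ (p * q).coeff k := by
  rw [coeff_mul]
  exact Finset.sum_nonneg fun _ _ => mul_nonneg (hp _) (hq _)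

theorem hasPoincareMultiplier_of_coeff_nonneg [Nontrivial R] (hp : ∀ k, 0 ≤ p.coeff k) :
    HasPoincareMultiplier p :=
  ⟨1, one_ne_zero, coeff_one_nonneg, by simpa⟩

theorem HasPoincareMultiplier.mul [NoZeroDivisors R] (hp : HasPoincareMultiplier p)
    (hq : HasPoincareMultiplier q) : HasPoincareMultiplier (p * q) := by
  obtain ⟨G, hG, hG_nonneg, hpG⟩ := hp
  obtain ⟨H, hH, hH_nonneg, hqH⟩ := hq
  refine ⟨G * H, mul_ne_zero hG hH, coeff_mul_nonneg hG_nonneg hH_nonneg, ?_⟩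
  rw [mul_mul_mul_comm]
  exact coeff_mul_nonneg hpG hqH

end OrderedSemiring

section QuadraticTimesBinomial

variable {R : Type*} [CommSemiring R] (b c : R) (n : ℕ)

theorem coeff_zero_quadratic_mul_X_add_one_pow :
    ((X ^ 2 + C b * X + C c) * (X + 1) ^ n).coeff 0 = c := by
  simp [add_mul, coeff_X_add_one_pow]

theorem coeff_one_quadratic_mul_X_add_one_pow :
    ((X ^ 2 + C b * X + C c) * (X + 1) ^ n).coeff 1 = b + c * n := by
  simp [add_mul, mul_assoc, coeff_X_add_one_pow, coeff_X_mul, coeff_X_pow_mul']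

theorem coeff_add_two_quadratic_mul_X_add_one_pow (j : ℕ) :
    ((X ^ 2 + C b * X + C c) * (X + 1) ^ n).coeff (j + 2) =
      n.choose j + b * n.choose (j + 1) + c * n.choose (j + 2) := by
  simp [add_mul, mul_assoc, coeff_X_add_one_pow, coeff_X_mul, coeff_X_pow_mul']

end QuadraticTimesBinomial

theorem choose_add_mul_choose_add_mul_choose_mul_eq {R : Type*} [CommRing R] (b c : R)
    (j u : ℕ) :
    (((j + 1 + u).choose j : R) + b * (j + 1 + u).choose (j + 1) +
        c * (j + 1 + u).choose (j + 2)) * ((u + 1) * (j + 2)) =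
      (j + 1 + u).choose (j + 1) *
        ((j + 1) * (j + 2) + b * ((u + 1) * (j + 2)) + c * (u * (u + 1))) := by
  have h₁ : (j + 1 + u).choose (j + 1) * (j + 1) = (j + 1 + u).choose j * (u + 1) := by
    simpa [show j + 1 + u - j = u + 1 by omega] using Nat.choose_succ_right_eq (j + 1 + u) j
  have h₂ : (j + 1 + u).choose (j + 2) * (j + 2) = (j + 1 + u).choose (j + 1) * u := by
    simpa using Nat.choose_succ_right_eq (j + 1 + u) (j + 1)
  have e₁ := congrArg (Nat.cast : ℕ → R) h₁
  have e₂ := congrArg (Nat.cast : ℕ → R) h₂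
  push_cast at e₁ e₂
  linear_combination -(j + 2 : R) * e₁ + c * (u + 1) * e₂

section LinearOrderedCommRing

variable {R : Type*} [CommRing R] [LinearOrder R] [IsStrictOrderedRing R] {b c : R}

theorem eval_quadratic_pos (hd : b ^ 2 < 4 * c) (x : R) :
    0 < (X ^ 2 + C b * X + C c).eval x := by
  simp only [eval_add, eval_pow, eval_mul, eval_C, eval_X]
  nlinarith [sq_nonneg (2 * x + b)]

theorem nonneg_of_X_add_C_dvd {F : R[X]} {a : R} (hdvd : X + C a ∣ F)
    (hF : ∀ x : R, 0 < x → 0 < F.eval x) : 0 ≤ a := by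
  by_contra! ha
  obtain ⟨Q, rfl⟩ := hdvd
  simpa using hF (-a) (by linarith)

end LinearOrderedCommRing

section LinearOrderedField

variable {K : Type*} [Field K] [LinearOrder K] [IsStrictOrderedRing K] {b c : K}

theorem exists_forall_add_ge_quadratic_nonneg (hd : b ^ 2 < 4 * c) :
    ∃ N : K, ∀ J u : K, 0 ≤ J → 0 ≤ u → N ≤ J + u →
      0 ≤ (J + 1) * (J + 2) + b * ((u + 1) * (J + 2)) + c * (u * (u + 1)) := by
  have hc : 0 < c := by nlinarith [sq_nonneg b]
  set δ := 4 * c - b ^ 2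
  have hδ : 0 < δ := by linarith
  have hB : 0 ≤ (1 + c) * |b| := by positivity
  -- with `m = J + u`, `(4 + 4c) E ≥ δ m² / 2 - 8 (1 + c) |b| (m + 1)`, nonnegative from this `N` on
  refine ⟨1 + 32 * (1 + c) * |b| / δ, fun J u hJ hu hN => ?_⟩
  set m := J + u
  have hm_large : 32 * (1 + c) * |b| ≤ δ * (m - 1) := by
    rw [← div_le_iff₀' hδ]
    linarith
  have hm_one : 1 ≤ m := by nlinarith
  -- `(4 + 4c)(J² + bJu + cu²) - δ(J² + u²) = (2J + bu)² + (2cu + bJ)²`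
  have hq : δ * (J ^ 2 + u ^ 2) ≤ (4 + 4 * c) * (J ^ 2 + b * J * u + c * u ^ 2) := by
    nlinarith [sq_nonneg (2 * J + b * u), sq_nonneg (2 * c * u + b * J)]
  have hm_sq : m ^ 2 ≤ 2 * (J ^ 2 + u ^ 2) := by nlinarith [sq_nonneg (J - u)]
  have hb : -(2 * |b| * (m + 1)) ≤ b * (J + 2 * u + 2) := by
    nlinarith [neg_abs_le b, abs_nonneg b]
  have hlin := mul_le_mul_of_nonneg_left hb (by positivity : (0 : K) ≤ 4 + 4 * c)
  have hquad : 16 * ((1 + c) * |b|) * (m + 1) ≤ δ * m ^ 2 := by nlinarith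
  have hrest : 0 ≤ (4 + 4 * c) * (3 * J + 2 + c * u) := by positivity
  refine nonneg_of_mul_nonneg_right (a := 4 + 4 * c) ?_ (by positivity)
  nlinarith

theorem eventually_choose_add_mul_choose_add_mul_choose_nonneg [Archimedean K]
    (hd : b ^ 2 < 4 * c) :
    ∀ᶠ n : ℕ in atTop, ∀ j, 0 ≤ (n.choose j : K) + b * n.choose (j + 1) + c * n.choose (j + 2) := by
  obtain ⟨N, hN⟩ := exists_forall_add_ge_quadratic_nonneg hd
  obtain ⟨N', hN'⟩ := exists_nat_ge N
  refine eventually_atTop.2 ⟨N' + 1, fun n hn j => ?_⟩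
  rcases lt_or_ge n (j + 1) with hjn | hjn
  · simp [Nat.choose_eq_zero_of_lt hjn, Nat.choose_eq_zero_of_lt (by omega : n < j + 2)]
  obtain ⟨u, rfl⟩ := Nat.exists_eq_add_of_le hjn
  have hE := hN j u (Nat.cast_nonneg j) (Nat.cast_nonneg u) <| hN'.trans <| by
    exact_mod_cast (by omega : N' ≤ j + u)
  refine nonneg_of_mul_nonneg_left ?_ (by positivity : (0 : K) < (u + 1) * (j + 2))
  rw [choose_add_mul_choose_add_mul_choose_mul_eq]
  positivity

theorem hasPoincareMultiplier_X_sq_add_C_mul_X_add_C [Archimedean K] (hd : b ^ 2 < 4 * c) :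
    HasPoincareMultiplier (X ^ 2 + C b * X + C c) := by
  have hc : 0 < c := by nlinarith [sq_nonneg b]
  have h_one : ∀ᶠ n : ℕ in atTop, 0 ≤ b + c * n := by
    obtain ⟨N, hN⟩ := exists_nat_ge (-b / c)
    refine eventually_atTop.2 ⟨N, fun n hn => ?_⟩
    have : -b ≤ c * n := by
      rw [← div_le_iff₀' hc]
      exact hN.trans (by exact_mod_cast hn)
    linarith
  obtain ⟨n, hn_one, hn_choose⟩ :=
    (h_one.and (eventually_choose_add_mul_choose_add_mul_choose_nonneg hd)).exists
  refine ⟨(X + 1) ^ n, pow_ne_zero n (X_add_C_ne_zero 1), fun k => ?_, ?_⟩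
  · rw [coeff_X_add_one_pow]
    positivity
  · rintro (_ | _ | j)
    · rw [coeff_zero_quadratic_mul_X_add_one_pow]
      exact hc.le
    · rw [coeff_one_quadratic_mul_X_add_one_pow]
      exact hn_one
    · rw [coeff_add_two_quadratic_mul_X_add_one_pow]
      exact hn_choose j
end LinearOrderedField

theorem sq_lt_four_mul_of_irreducible {b c : ℝ} (h : Irreducible (X ^ 2 + C b * X + C c)) :
    b ^ 2 < 4 * c := by
  by_contra! hd
  obtain ⟨x, hx⟩ := exists_quadratic_eq_zero one_ne_zero
    ⟨√(discrim 1 b c), (Real.mul_self_sqrt (by rw [discrim]; linarith)).symm⟩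
  have := natDegree_eq_of_degree_eq_some <|
    degree_eq_one_of_irreducible_of_root h (x := x) (by simpa [sq] using hx)
  rw [(isMonicOfDegree_add_add_two b c).natDegree_eq] at this
  exact absurd this (by decide)

theorem Monic.pos_and_hasPoincareMultiplier_of_irreducible_of_dvd {p F : ℝ[X]} (hp : p.Monic)
    (hirr : Irreducible p) (hdvd : p ∣ F) (hF : ∀ x : ℝ, 0 < x → 0 < F.eval x) :
    (∀ x : ℝ, 0 < x → 0 < p.eval x) ∧ HasPoincareMultiplier p := by
  obtain hdeg | hdeg : p.natDegree = 1 ∨ p.natDegree = 2 := by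
    have := hirr.natDegree_pos
    have := hirr.natDegree_le_two
    omega
  · obtain ⟨a, rfl⟩ := isMonicOfDegree_one_iff.mp ⟨hdeg, hp⟩
    have ha := nonneg_of_X_add_C_dvd hdvd hF
    refine ⟨fun x hx => by simp only [eval_add, eval_X, eval_C]; linarith,
      hasPoincareMultiplier_of_coeff_nonneg fun k => ?_⟩
    rcases k with _ | _ | k <;> simp [coeff_X, coeff_C, ha]
  · obtain ⟨b, c, rfl⟩ := isMonicOfDegree_two_iff.mp ⟨hdeg, hp⟩
    have hd := sq_lt_four_mul_of_irreducible hirr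
    exact ⟨fun x _ => eval_quadratic_pos hd x, hasPoincareMultiplier_X_sq_add_C_mul_X_add_C hd⟩

theorem Monic.hasPoincareMultiplier_of_pos {F : ℝ[X]} (hF : F.Monic)
    (hpos : ∀ x : ℝ, 0 < x → 0 < F.eval x) : HasPoincareMultiplier F := by
  induction hd : F.natDegree using Nat.strong_induction_on generalizing F with
  | _ d ih =>
  rcases Nat.eq_zero_or_pos d with rfl | hd_pos
  · rw [hF.natDegree_eq_zero.mp hd]
    exact hasPoincareMultiplier_of_coeff_nonneg coeff_one_nonneg
  obtain ⟨p, hp, hirr, Q, rfl⟩ :=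
    exists_monic_irreducible_factor F (not_isUnit_of_natDegree_pos F (hd ▸ hd_pos))
  obtain ⟨hp_pos, hp_mult⟩ :=
    hp.pos_and_hasPoincareMultiplier_of_irreducible_of_dvd hirr (dvd_mul_right p Q) hpos
  have hQ : Q.Monic := hp.of_mul_monic_left hF
  have hQ_pos : ∀ x : ℝ, 0 < x → 0 < Q.eval x := fun x hx =>
    pos_of_mul_pos_right (by simpa using hpos x hx) (hp_pos x hx).le
  refine hp_mult.mul (ih Q.natDegree ?_ hQ hQ_pos rfl)
  rw [← hd, hp.natDegree_mul hQ]
  exact Nat.lt_add_of_pos_left hirr.natDegree_pos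

end Polynomial

theorem stmt8 (F : Polynomial ℝ) (hF : F.Monic) (hpos : ∀ x : ℝ, 0 < x → 0 < F.eval x) :
    ∃ G : Polynomial ℝ, G ≠ 0 ∧ (∀ k, 0 ≤ G.coeff k) ∧ ∀ k, 0 ≤ (F * G).coeff k :=
  hF.hasPoincareMultiplier_of_pos hpos
end

section
/- A monic real polynomial F satisfies F(x) > 0 for all x > 0 if and only if there exists a nonzero polynomial G with nonnegative coefficients such that F·G has nonnegative coefficients. -/
open Polynomial

lemma coeffForm (b c : ℝ) (P : Polynomial ℝ) (k : ℕ) :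
    ((X^2 - C (2*b) * X + C c) * P).coeff k =
      (X^2 * P).coeff k - 2*b * ((X * P).coeff k) + c * (P.coeff k) := by
  have h : (X^2 - C (2*b) * X + C c) * P = X^2 * P - C (2*b) * (X * P) + C c * P := by ring
  rw [h, coeff_add, coeff_sub, coeff_C_mul, coeff_C_mul]

lemma chooseId (n k : ℕ) (h : k ≤ n) :
    (n.choose (k+1) : ℝ) * (k+1) = (n.choose k : ℝ) * ((n : ℝ) - k) := by
  have h' := congrArg (Nat.cast (R := ℝ)) (Nat.choose_succ_right_eq n k)
  push_cast [Nat.cast_sub h] at h'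
  linarith

lemma keystep (b c M u v : ℝ) (hM1 : 1 ≤ M) (hMkey : b^2*(M+1)^2 ≤ c*M^2)
    (huM : M ≤ u) (hvM : M ≤ v) (hb : 0 < b) (hc : 0 < c) :
    b^2*((u+1)*(v+1)) ≤ c*(u*v) := by
  have hu0 : 0 < u := by linarith
  have hv0 : 0 < v := by linarith
  have e1 : M * (u+1) ≤ u * (M+1) := by nlinarith
  have e2 : M * (v+1) ≤ v * (M+1) := by nlinarith
  have e3 : (M*(u+1)) * (M*(v+1)) ≤ (u*(M+1)) * (v*(M+1)) :=
    mul_le_mul e1 e2 (by positivity) (by positivity)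
  have e4 : b^2 * ((M*(u+1)) * (M*(v+1))) ≤ b^2 * ((u*(M+1)) * (v*(M+1))) :=
    mul_le_mul_of_nonneg_left e3 (sq_nonneg b)
  have e5 : (b^2*(M+1)^2) * (u*v) ≤ (c*M^2) * (u*v) :=
    mul_le_mul_of_nonneg_right hMkey (by positivity)
  have hM2 : (0:ℝ) < M^2 := by positivity
  rw [← mul_le_mul_iff_of_pos_right hM2]
  nlinarith [e4, e5]

lemma midstep (b c A B D u v : ℝ) (hb : 0 < b) (hc : 0 < c) (hA0 : 0 ≤ A) (hB0 : 0 ≤ B)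
    (hD0 : 0 ≤ D) (hu0 : 0 < u) (hv0 : 0 < v)
    (rA' : B * u = A * (v+1)) (rD' : D * (u+1) = B * v)
    (key : b^2*((u+1)*(v+1)) ≤ c*(u*v)) : 0 ≤ A - 2*b*B + c*D := by
  have eAD : (c * (A*D)) * ((u+1)*(v+1)) = c * B^2 * (u*v) := by
    linear_combination (-(c*D*(u+1)))*rA' + (c*B*u)*rD'
  have e6 : (b^2 * B^2) * ((u+1)*(v+1)) ≤ (c*(A*D)) * ((u+1)*(v+1)) := by
    rw [eAD]
    calc (b^2*B^2) * ((u+1)*(v+1)) = B^2 * (b^2 * ((u+1)*(v+1))) := by ring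
      _ ≤ B^2 * (c * (u*v)) := mul_le_mul_of_nonneg_left key (sq_nonneg B)
      _ = c * B^2 * (u*v) := by ring
  have key2 : b^2 * B^2 ≤ c * (A*D) := le_of_mul_le_mul_right e6 (by positivity)
  have hS : 0 ≤ A + c*D := by positivity
  have hT : 0 ≤ 2*b*B := by positivity
  have hsq : (2*b*B)^2 ≤ (A + c*D)^2 := by nlinarith [sq_nonneg (A - c*D), key2]
  nlinarith [(pow_le_pow_iff_left₀ hT hS two_ne_zero).mp hsq]

lemma quadNN (b c : ℝ) (hbc : b^2 < c) :
    ∃ n : ℕ, ∀ k, 0 ≤ ((X^2 - C (2*b) * X + C c) * (1+X)^n).coeff k := by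
  have hc : 0 < c := lt_of_le_of_lt (sq_nonneg b) hbc
  -- reduce every coefficient to the choose formula
  have cf : ∀ n k : ℕ, ((X^2 - C (2*b) * X + C c) * (1+X)^n).coeff (k+2)
      = (n.choose k : ℝ) - 2*b*(n.choose (k+1)) + c*(n.choose (k+2)) := by
    intro n k
    rw [coeffForm, coeff_X_pow_mul, show k + 2 = (k+1) + 1 from rfl, coeff_X_mul,
      coeff_one_add_X_pow, coeff_one_add_X_pow, coeff_one_add_X_pow]
  have cf0 : ∀ n : ℕ, ((X^2 - C (2*b) * X + C c) * (1+X)^n).coeff 0 = c := by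
    intro n
    rw [coeffForm, coeff_X_pow_mul']
    simp [coeff_one_add_X_pow]
  have cf1 : ∀ n : ℕ, ((X^2 - C (2*b) * X + C c) * (1+X)^n).coeff 1 = -(2*b) + c*n := by
    intro n
    rw [coeffForm, show (X * (1+X)^n : Polynomial ℝ).coeff 1 = ((1+X)^n : Polynomial ℝ).coeff 0 from coeff_X_mul _ 0, coeff_X_pow_mul']
    simp [coeff_one_add_X_pow]
  rcases le_or_gt b 0 with hb | hb
  · refine ⟨0, fun k => ?_⟩
    match k with
    | 0 => rw [cf0]; positivity
    | 1 => rw [cf1]; simp; nlinarith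
    | (j+2) =>
      rw [cf]
      match j with
      | 0 => norm_num
      | (i+1) => simp [Nat.choose_eq_zero_of_lt]
  · -- b > 0
    obtain ⟨M, hM⟩ := exists_nat_ge (3*b^2/(c - b^2) + 1)
    have hM1 : (1:ℝ) ≤ M := by
      have h0 : 0 ≤ 3*b^2/(c - b^2) := div_nonneg (by positivity) (by linarith)
      linarith
    have hM1n : 1 ≤ M := by exact_mod_cast hM1
    have hMkey : b^2 * ((M:ℝ)+1)^2 ≤ c * (M:ℝ)^2 := by
      have h1 : 3*b^2 ≤ (c - b^2) * M := by
        rw [div_add' _ _ _ (by linarith : (c:ℝ) - b^2 ≠ 0), div_le_iff₀ (by linarith)] at hM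
        nlinarith
      nlinarith [mul_le_mul_of_nonneg_left h1 (le_trans zero_le_one hM1)]
    obtain ⟨n, hn⟩ :=
      exists_nat_ge ((M:ℝ) + 2*b*((M:ℝ)+1)/c + (2*b*(M:ℝ) + (M:ℝ)) + (2*(M:ℝ) + 5) + 2*b/c)
    have p1 : (0:ℝ) ≤ 2*b*((M:ℝ)+1)/c := by positivity
    have p2 : (0:ℝ) ≤ 2*b/c := by positivity
    have p3 : (0:ℝ) ≤ 2*b*(M:ℝ) := by positivity
    have hM0 : (0:ℝ) ≤ M := by linarith
    have f1 : 2*b ≤ c*n := by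
      have h' : 2*b/c ≤ (n:ℝ) := by linarith
      rw [div_le_iff₀ hc] at h'; linarith
    have f2 : 2*b*((M:ℝ)+1) ≤ c*((n:ℝ) - M) := by
      have h' : 2*b*((M:ℝ)+1)/c ≤ (n:ℝ) - M := by linarith
      rw [div_le_iff₀ hc] at h'; nlinarith
    have f3 : 2*b*(M:ℝ) + (M:ℝ) ≤ n := by linarith
    have f4 : 2*(M:ℝ) + 5 ≤ n := by linarith
    have hMn : M + 2 ≤ n := by
      have : ((M:ℕ):ℝ) + 2 < ((n:ℕ):ℝ) + 1 := by linarith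
      have := Nat.cast_lt (α := ℝ) |>.mp (by push_cast at this ⊢; linarith : ((M+2 : ℕ):ℝ) < ((n+1:ℕ):ℝ))
      omega
    refine ⟨n, fun k => ?_⟩
    match k with
    | 0 => rw [cf0]; positivity
    | 1 => rw [cf1]; linarith
    | (j+2) =>
      rw [cf]
      rcases lt_or_ge n (j+1) with hj | hj
      · rcases Nat.lt_or_ge n j with hj2 | hj2
        · simp [Nat.choose_eq_zero_of_lt, hj2, Nat.choose_eq_zero_of_lt (by omega : n < j+1),
            Nat.choose_eq_zero_of_lt (by omega : n < j+2)]
        · have hjn : j = n := by omega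
          subst hjn
          simp [Nat.choose_eq_zero_of_lt (by omega : j < j+1),
            Nat.choose_eq_zero_of_lt (by omega : j < j+2)]
      · -- j + 1 ≤ n
        set A := (n.choose j : ℝ) with hA
        set B := (n.choose (j+1) : ℝ) with hB
        set D := (n.choose (j+2) : ℝ) with hD
        have hA0 : 0 ≤ A := Nat.cast_nonneg _
        have hB0 : 0 ≤ B := Nat.cast_nonneg _
        have hD0 : 0 ≤ D := Nat.cast_nonneg _
        have rA : B * ((j:ℝ)+1) = A * ((n:ℝ) - j) := chooseId n j (by omega)
        have hjr : (j:ℝ) + 1 ≤ (n:ℝ) := by exact_mod_cast hj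
        rcases lt_or_ge n (j+1+M) with hhigh | hrest
        · -- high region : A ≥ 2bB
          have hnj : (n:ℝ) ≤ (j:ℝ) + M := by exact_mod_cast (by omega : n ≤ j + M)
          have h1 : 2*b*((n:ℝ) - j) ≤ (j:ℝ)+1 := by
            have e1 : 2*b*((n:ℝ)-j) ≤ 2*b*(M:ℝ) :=
              mul_le_mul_of_nonneg_left (by linarith only [hnj]) (by linarith only [hb])
            linarith only [e1, f3, hnj]
          have hnj0 : (0:ℝ) < (n:ℝ) - j := by linarith
          have h2 : 2*b*B ≤ A := by
            have h3 := mul_le_mul_of_nonneg_left h1 hB0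
            have h4 : (2*b*B)*((n:ℝ)-j) ≤ A*((n:ℝ)-j) := by
              calc (2*b*B)*((n:ℝ)-j) = B * (2*b*((n:ℝ)-j)) := by ring
                _ ≤ B * ((j:ℝ)+1) := h3
                _ = A*((n:ℝ)-j) := rA
            exact le_of_mul_le_mul_right h4 hnj0
          linarith [mul_nonneg hc.le hD0, h2]
        · rcases le_or_gt (j+1) M with hlow | hmid
          · -- low region : cD ≥ 2bB
            have hjn2 : j + 2 ≤ n := by omega
            have rD : D * ((j:ℝ)+2) = B * ((n:ℝ) - ((j:ℝ)+1)) := by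
              have h' := chooseId n (j+1) (by omega)
              push_cast at h' ⊢
              linarith
            have hjM : (j:ℝ) + 1 ≤ (M:ℝ) := by exact_mod_cast hlow
            have h1 : 2*b*((j:ℝ)+2) ≤ c * ((n:ℝ) - ((j:ℝ)+1)) := by
              have e1 : 2*b*((j:ℝ)+2) ≤ 2*b*((M:ℝ)+1) :=
                mul_le_mul_of_nonneg_left (by linarith only [hjM]) (by linarith only [hb])
              have e2 : c*((n:ℝ) - M) ≤ c*((n:ℝ) - ((j:ℝ)+1)) :=
                mul_le_mul_of_nonneg_left (by linarith only [hjM]) hc.le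
              linarith only [e1, e2, f2]
            have h2 : 2*b*B ≤ c*D := by
              have h3 := mul_le_mul_of_nonneg_left h1 hB0
              have h4 : (2*b*B)*((j:ℝ)+2) ≤ (c*D)*((j:ℝ)+2) := by
                calc (2*b*B)*((j:ℝ)+2) = B * (2*b*((j:ℝ)+2)) := by ring
                  _ ≤ B * (c * ((n:ℝ) - ((j:ℝ)+1))) := h3
                  _ = c * (B * ((n:ℝ) - ((j:ℝ)+1))) := by ring
                  _ = c * (D * ((j:ℝ)+2)) := by rw [rD]
                  _ = (c*D)*((j:ℝ)+2) := by ring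
              exact le_of_mul_le_mul_right h4 (by positivity)
            linarith [h2, hA0]
          · -- middle region
            have hjn2 : j + 2 ≤ n := by omega
            have rD : D * ((j:ℝ)+2) = B * ((n:ℝ) - ((j:ℝ)+1)) := by
              have h' := chooseId n (j+1) (by omega)
              push_cast at h' ⊢
              linarith
            have hMj : (M:ℝ) < (j:ℝ) + 1 := by exact_mod_cast hmid
            have hnjM : (j:ℝ) + 1 + M ≤ (n:ℝ) := by exact_mod_cast hrest
            have rA' : B * ((j:ℝ)+1) = A * (((n:ℝ) - ((j:ℝ)+1)) + 1) := by
              linear_combination rA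
            have rD' : D * (((j:ℝ)+1)+1) = B * ((n:ℝ) - ((j:ℝ)+1)) := by
              linear_combination rD
            have key := keystep b c M ((j:ℝ)+1) ((n:ℝ) - ((j:ℝ)+1)) hM1 hMkey
              (by linarith) (by linarith) hb hc
            have := midstep b c A B D ((j:ℝ)+1) ((n:ℝ) - ((j:ℝ)+1)) hb hc hA0 hB0 hD0
              (by linarith) (by linarith) rA' rD' key
            linarith

lemma mulNN (P Q : Polynomial ℝ) (hP : ∀ k, 0 ≤ P.coeff k) (hQ : ∀ k, 0 ≤ Q.coeff k) :
    ∀ k, 0 ≤ (P * Q).coeff k := by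
  intro k
  rw [coeff_mul]
  exact Finset.sum_nonneg fun p _ => mul_nonneg (hP p.1) (hQ p.2)

lemma evalPos (P : Polynomial ℝ) (hP0 : P ≠ 0) (hP : ∀ k, 0 ≤ P.coeff k) {x : ℝ} (hx : 0 < x) :
    0 < P.eval x := by
  rw [eval_eq_sum_range]
  apply Finset.sum_pos'
  · exact fun i _ => mul_nonneg (hP i) (pow_pos hx i).le
  · refine ⟨P.natDegree, Finset.self_mem_range_succ _, ?_⟩
    have h : P.coeff P.natDegree ≠ 0 := fun h => hP0 (leadingCoeff_eq_zero.mp h)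
    exact mul_pos (lt_of_le_of_ne (hP _) (Ne.symm h)) (pow_pos hx _)

lemma linNN (a : ℝ) (ha : a ≤ 0) : ∀ k, 0 ≤ (X - C a).coeff k := by
  intro k
  rw [coeff_sub, coeff_X, coeff_C]
  match k with
  | 0 => norm_num; linarith
  | 1 => norm_num
  | (j+2) => norm_num

lemma forwardDir : ∀ (n : ℕ) (F : Polynomial ℝ), F.natDegree = n → F.Monic →
    (∀ x : ℝ, 0 < x → 0 < F.eval x) →
    ∃ G : Polynomial ℝ, G ≠ 0 ∧ (∀ k, 0 ≤ G.coeff k) ∧ ∀ k, 0 ≤ (F * G).coeff k := by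
  intro n
  induction n using Nat.strong_induction_on with
  | _ n ih =>
    intro F hdeg hF hpos
    rcases Nat.eq_zero_or_pos n with h0 | hn0
    · subst h0
      have hF1 : F = 1 := hF.natDegree_eq_zero.mp hdeg
      refine ⟨1, one_ne_zero, fun k => ?_, fun k => ?_⟩
      · rw [coeff_one]; positivity
      · rw [hF1, one_mul, coeff_one]; positivity
    · -- F has a complex root
      have hd0 : F.degree ≠ 0 := by
        rw [degree_eq_natDegree hF.ne_zero, hdeg]
        exact_mod_cast (by omega : (n:ℤ) ≠ 0)
      obtain ⟨z, hz⟩ := IsAlgClosed.exists_aeval_eq_zero ℂ F hd0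
      rcases eq_or_ne z.im 0 with him | him
      · -- real root
        set a := z.re with ha
        have hroot : F.eval a = 0 := by
          have hza : z = (a : ℂ) := Complex.ext rfl (by simp [him])
          rw [hza, show ((a:ℂ)) = algebraMap ℝ ℂ a from rfl,
            aeval_algebraMap_apply_eq_algebraMap_eval] at hz
          simpa using hz
        have hale : a ≤ 0 := by
          by_contra h
          exact absurd hroot (ne_of_gt (hpos a (lt_of_not_ge h)))
        obtain ⟨F₂, hfac⟩ := dvd_iff_isRoot.mpr hroot
        have hmon : F₂.Monic := (monic_X_sub_C a).of_mul_monic_left (hfac ▸ hF)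
        have hdeg2 : F₂.natDegree = n - 1 := by
          have := (monic_X_sub_C a).natDegree_mul hmon
          rw [← hfac, hdeg, natDegree_X_sub_C] at this
          omega
        have hpos2 : ∀ x : ℝ, 0 < x → 0 < F₂.eval x := by
          intro x hx
          have h1 := hpos x hx
          rw [hfac, eval_mul, eval_sub, eval_X, eval_C] at h1
          nlinarith [hx, hale]
        obtain ⟨G₂, hG0, hGnn, hFGnn⟩ := ih (n-1) (by omega) F₂ hdeg2 hmon hpos2
        refine ⟨G₂, hG0, hGnn, fun k => ?_⟩
        have : F * G₂ = (X - C a) * (F₂ * G₂) := by rw [hfac]; ring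
        rw [this]
        exact mulNN _ _ (linNN a hale) hFGnn k
      · -- complex root, quadratic factor
        obtain ⟨F₂, hfac⟩ := F.quadratic_dvd_of_aeval_eq_zero_im_ne_zero hz him
        set b := z.re with hb
        set c := ‖z‖^2 with hc
        have hbc : b^2 < c := by
          have : ‖z‖^2 = z.re^2 + z.im^2 := by
            rw [Complex.sq_norm, Complex.normSq_apply]; ring
          rw [hc, this, hb]
          nlinarith [sq_nonneg z.im, sq_pos_of_ne_zero him]
        have hq : (X^2 - C (2*b) * X + C c : Polynomial ℝ).Monic := by
          have hrw : (X^2 - C (2*b) * X + C c : Polynomial ℝ)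
              = X^2 + (C (-(2*b)) * X + C c) := by
            rw [map_neg]; ring
          rw [hrw]
          exact monic_X_pow_add (lt_of_le_of_lt (degree_linear_le) (by norm_num))
        have hmon : F₂.Monic := hq.of_mul_monic_left (hfac ▸ hF)
        have hqd : (X^2 - C (2*b) * X + C c : Polynomial ℝ).natDegree = 2 := by
          have := hq.natDegree_eq_zero
          compute_degree!
        have hdeg2 : F₂.natDegree = n - 2 ∧ 2 ≤ n := by
          have h2 := hq.natDegree_mul hmon
          rw [← hfac, hdeg, hqd] at h2
          omega
        have hqpos : ∀ x : ℝ, 0 < (X^2 - C (2*b) * X + C c : Polynomial ℝ).eval x := by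
          intro x
          simp only [eval_add, eval_sub, eval_mul, eval_pow, eval_X, eval_C]
          nlinarith [sq_nonneg (x - b)]
        have hpos2 : ∀ x : ℝ, 0 < x → 0 < F₂.eval x := by
          intro x hx
          have h1 := hpos x hx
          rw [hfac, eval_mul] at h1
          have h2 := hqpos x
          nlinarith
        obtain ⟨G₂, hG0, hGnn, hFGnn⟩ := ih (n-2) (by omega) F₂ hdeg2.1 hmon hpos2
        obtain ⟨m, hm⟩ := quadNN b c hbc
        refine ⟨(1+X)^m * G₂, ?_, ?_, ?_⟩
        · apply mul_ne_zero _ hG0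
          have hmon1 : ((1:Polynomial ℝ)+X).Monic := by
            simpa [add_comm] using monic_X_add_C (1:ℝ)
          exact (hmon1.pow m).ne_zero
        · exact mulNN _ _ (fun k => by rw [coeff_one_add_X_pow]; positivity) hGnn
        · intro k
          have hrw : F * ((1+X)^m * G₂)
              = ((X^2 - C (2*b) * X + C c) * (1+X)^m) * (F₂ * G₂) := by
            rw [hfac]; ring
          rw [hrw]
          exact mulNN _ _ hm hFGnn k

theorem stmt9 (F : Polynomial ℝ) (hF : F.Monic) :
    (∀ x : ℝ, 0 < x → 0 < F.eval x) ↔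
      ∃ G : Polynomial ℝ, G ≠ 0 ∧ (∀ k, 0 ≤ G.coeff k) ∧ ∀ k, 0 ≤ (F * G).coeff k := by
  constructor
  · exact forwardDir F.natDegree F rfl hF
  · rintro ⟨G, hG0, hGnn, hFGnn⟩ x hx
    have hFG0 : F * G ≠ 0 := mul_ne_zero hF.ne_zero hG0
    have h1 : 0 < (F * G).eval x := evalPos _ hFG0 hFGnn hx
    have h2 : 0 < G.eval x := evalPos _ hG0 hGnn hx
    rw [eval_mul] at h1
    nlinarith
end

section
/- Let F be a monic real polynomial with no positive real roots. Then there exists a nonzero polynomial G with nonnegative coefficients such that F·G has nonnegative coefficients. -/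
/-!
Over `ℝ` a monic `F` is the product of its monic irreducible factors, and the polynomials
admitting a multiplier as in the theorem form a monoid. A factor `X + a` with `a ≥ 0` has
nonnegative coefficients already; a factor `X ^ 2 + b * X + c` has `b ^ 2 < 4 * c`. If `b < 0`,
multiplying it by `X ^ 2 - b * X + c` gives `Q (X ^ 2)` with
`Q = Y ^ 2 + (2 * c - b ^ 2) * Y + c ^ 2`. Writing `b = -2 * √c * cos θ`, this doubles `θ`, and
the relative discriminant `(4 * c - b ^ 2) / (4 * c) = sin² θ` gets multiplied by
`4 * cos² θ ≥ 2` as long as the middle coefficient stays negative; as it never exceeds `1`,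
finitely many squarings make the middle coefficient nonnegative.
-/

namespace Polynomial

section OrderedSemiring

variable {R : Type*} [CommSemiring R] [PartialOrder R] [IsOrderedRing R]

def nonnegCoeffs : Subsemiring R[X] where
  carrier := {p | ∀ n, 0 ≤ p.coeff n}
  mul_mem' {p q} hp hq n := by
    rw [coeff_mul]
    exact Finset.sum_nonneg fun x _ => mul_nonneg (hp _) (hq _)
  one_mem' n := by
    rw [coeff_one]
    split_ifs <;> simp
  add_mem' {p q} hp hq n := by
    rw [coeff_add]
    exact add_nonneg (hp n) (hq n)
  zero_mem' n := by simp

theorem C_mem_nonnegCoeffs {a : R} (ha : 0 ≤ a) : C a ∈ nonnegCoeffs := fun n => by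
  rw [coeff_C]
  split_ifs
  exacts [ha, le_rfl]

theorem X_mem_nonnegCoeffs : (X : R[X]) ∈ nonnegCoeffs := fun n => by
  rw [coeff_X]
  split_ifs <;> simp

theorem expand_mem_nonnegCoeffs {p : R[X]} {k : ℕ} (hk : 0 < k) (hp : p ∈ nonnegCoeffs) :
    expand R k p ∈ nonnegCoeffs := fun n => by
  rw [coeff_expand hk]
  split_ifs
  exacts [hp _, le_rfl]

variable [NoZeroDivisors R] [Nontrivial R]

def nonnegMultipliable : Submonoid R[X] where
  carrier := {p | ∃ g ∈ nonnegCoeffs, g ≠ 0 ∧ p * g ∈ nonnegCoeffs}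
  one_mem' := ⟨1, one_mem _, one_ne_zero, by rw [one_mul]; exact one_mem _⟩
  mul_mem' := by
    rintro p q ⟨g, hg, hg0, hpg⟩ ⟨h, hh, hh0, hqh⟩
    refine ⟨g * h, mul_mem hg hh, mul_ne_zero hg0 hh0, ?_⟩
    rw [mul_mul_mul_comm]
    exact mul_mem hpg hqh

theorem mem_nonnegMultipliable_of_mem_nonnegCoeffs {p : R[X]} (hp : p ∈ nonnegCoeffs) :
    p ∈ nonnegMultipliable :=
  ⟨1, one_mem _, one_ne_zero, by rw [mul_one]; exact hp⟩

theorem mem_nonnegMultipliable_of_mul_mem {p r : R[X]} (hr : r ∈ nonnegCoeffs) (hr0 : r ≠ 0)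
    (h : p * r ∈ nonnegMultipliable) : p ∈ nonnegMultipliable := by
  obtain ⟨g, hg, hg0, hprg⟩ := h
  exact ⟨r * g, mul_mem hr hg, mul_ne_zero hr0 hg0, by rwa [← mul_assoc]⟩

theorem expand_mem_nonnegMultipliable {p : R[X]} {k : ℕ} (hk : 0 < k)
    (hp : p ∈ nonnegMultipliable) : expand R k p ∈ nonnegMultipliable := by
  obtain ⟨g, hg, hg0, hpg⟩ := hp
  refine ⟨expand R k g, expand_mem_nonnegCoeffs hk hg, (expand_ne_zero hk).mpr hg0, ?_⟩
  rw [← map_mul]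
  exact expand_mem_nonnegCoeffs hk hpg

end OrderedSemiring

theorem X_sq_add_C_mul_X_add_C_mem_nonnegCoeffs {b c : ℝ} (hb : 0 ≤ b) (hc : 0 ≤ c) :
    X ^ 2 + C b * X + C c ∈ nonnegCoeffs :=
  add_mem (add_mem (pow_mem X_mem_nonnegCoeffs 2) (mul_mem (C_mem_nonnegCoeffs hb)
    X_mem_nonnegCoeffs)) (C_mem_nonnegCoeffs hc)

theorem X_sq_add_C_mul_X_add_C_mem_nonnegMultipliable_of_le_two_pow_mul {b c : ℝ} (n : ℕ)
    (hc : 0 ≤ c) (h : 4 * c ≤ 2 ^ n * (4 * c - b ^ 2)) :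
    X ^ 2 + C b * X + C c ∈ nonnegMultipliable := by
  induction n generalizing b c with
  | zero =>
    have hb : b = 0 := by nlinarith
    subst hb
    exact mem_nonnegMultipliable_of_mem_nonnegCoeffs
      (X_sq_add_C_mul_X_add_C_mem_nonnegCoeffs le_rfl hc)
  | succ n ih =>
    rcases le_or_gt 0 b with hb | hb
    · exact mem_nonnegMultipliable_of_mem_nonnegCoeffs
        (X_sq_add_C_mul_X_add_C_mem_nonnegCoeffs hb hc)
    have hQ : X ^ 2 + C (2 * c - b ^ 2) * X + C (c ^ 2) ∈ nonnegMultipliable := by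
      rcases le_or_gt 0 (2 * c - b ^ 2) with hb' | hb'
      · exact mem_nonnegMultipliable_of_mem_nonnegCoeffs
          (X_sq_add_C_mul_X_add_C_mem_nonnegCoeffs hb' (sq_nonneg c))
      refine ih (sq_nonneg c) ?_
      have hdisc : 0 ≤ 4 * c - b ^ 2 := by nlinarith [pow_pos (two_pos (α := ℝ)) (n + 1)]
      calc 4 * c ^ 2 ≤ c * (2 ^ (n + 1) * (4 * c - b ^ 2)) := by nlinarith
        _ ≤ 2 ^ n * (b ^ 2 * (4 * c - b ^ 2)) := by
          rw [pow_succ]; nlinarith [mul_nonneg (pow_pos (two_pos (α := ℝ)) n).le hdisc]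
        _ = 2 ^ n * (4 * c ^ 2 - (2 * c - b ^ 2) ^ 2) := by ring
    refine mem_nonnegMultipliable_of_mul_mem
      (X_sq_add_C_mul_X_add_C_mem_nonnegCoeffs (neg_nonneg.mpr hb.le) hc)
      (isMonicOfDegree_add_add_two _ _).ne_zero ?_
    have hsquare : (X ^ 2 + C b * X + C c) * (X ^ 2 + C (-b) * X + C c) =
        expand ℝ 2 (X ^ 2 + C (2 * c - b ^ 2) * X + C (c ^ 2)) := by
      simp only [map_add, map_mul, map_pow, expand_C, expand_X, map_neg, map_sub, map_ofNat]
      ring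
    rw [hsquare]
    exact expand_mem_nonnegMultipliable two_pos hQ

theorem X_sq_add_C_mul_X_add_C_mem_nonnegMultipliable {b c : ℝ} (h : b ^ 2 < 4 * c) :
    X ^ 2 + C b * X + C c ∈ nonnegMultipliable := by
  have hc : 0 < c := by nlinarith [sq_nonneg b]
  obtain ⟨n, hn⟩ := pow_unbounded_of_one_lt (4 * c / (4 * c - b ^ 2)) one_lt_two
  rw [div_lt_iff₀ (by linarith)] at hn
  exact X_sq_add_C_mul_X_add_C_mem_nonnegMultipliable_of_le_two_pow_mul n hc.le hn.le

theorem sq_lt_four_mul_of_forall_not_isRoot {b c : ℝ}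
    (h : ∀ x, ¬ (X ^ 2 + C b * X + C c).IsRoot x) : b ^ 2 < 4 * c := by
  by_contra! hbc
  obtain ⟨x, hx⟩ := exists_quadratic_eq_zero one_ne_zero
    ⟨√(discrim 1 b c), (Real.mul_self_sqrt (by rw [discrim]; linarith)).symm⟩
  refine h x ?_
  simp only [IsRoot, eval_add, eval_mul, eval_pow, eval_C, eval_X]
  linear_combination hx

theorem Monic.mem_nonnegMultipliable_of_irreducible {q : ℝ[X]} (hq : q.Monic)
    (hirr : Irreducible q) (hroot : ∀ x, 0 < x → ¬ q.IsRoot x) : q ∈ nonnegMultipliable := by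
  obtain hdeg | hdeg : q.natDegree = 1 ∨ q.natDegree = 2 := by
    have := hirr.natDegree_pos
    have := hirr.natDegree_le_two
    omega
  · obtain ⟨a, rfl⟩ := isMonicOfDegree_one_iff.mp ⟨hdeg, hq⟩
    have ha : 0 ≤ a := by
      by_contra! ha
      exact hroot (-a) (neg_pos.mpr ha) (by simp)
    exact mem_nonnegMultipliable_of_mem_nonnegCoeffs
      (add_mem X_mem_nonnegCoeffs (C_mem_nonnegCoeffs ha))
  · obtain ⟨b, c, rfl⟩ := isMonicOfDegree_two_iff.mp ⟨hdeg, hq⟩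
    exact X_sq_add_C_mul_X_add_C_mem_nonnegMultipliable
      (sq_lt_four_mul_of_forall_not_isRoot fun x => hirr.not_isRoot_of_natDegree_ne_one (by omega))

end Polynomial

open Polynomial UniqueFactorizationMonoid

theorem stmt10 (F : Polynomial ℝ) (hF : F.Monic)
    (h : ∀ x : ℝ, 0 < x → ¬ F.IsRoot x) :
    ∃ G : Polynomial ℝ, G ≠ 0 ∧ (∀ k, 0 ≤ G.coeff k) ∧ ∀ k, 0 ≤ (F * G).coeff k := by
  have hfactors : ∀ q ∈ normalizedFactors F, q ∈ nonnegMultipliable := fun q hq =>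
    have hirr := irreducible_of_normalized_factor q hq
    Monic.mem_nonnegMultipliable_of_irreducible
      (normalize_normalized_factor q hq ▸ monic_normalize hirr.ne_zero) hirr
      fun x hx hroot => h x hx (hroot.dvd (dvd_of_mem_normalizedFactors hq))
  have hprod : (normalizedFactors F).prod = F := by
    rw [prod_normalizedFactors_eq hF.ne_zero, hF.normalize_eq_self]
  obtain ⟨G, hG, hG0, hFG⟩ := hprod ▸ Submonoid.multiset_prod_mem _ _ hfactors
  exact ⟨G, hG0, hG, hFG⟩
end

section
/- For positive reals a₁, ..., a_m, the number of sign variations in the coefficient sequence of the polynomial ∏_{i=1}^m (x - a_i) equals m. -/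
open Polynomial

/-- Number of sign variations of a finite real sequence: the number of sign
changes between consecutive nonzero terms (zeros are ignored). -/
noncomputable def signVarList (l : List ℝ) : ℕ :=
  let l' := l.filter (fun x => decide (x ≠ 0))
  (l'.zip l'.tail).countP (fun p => decide (p.1 * p.2 < 0))

/-- Number of sign variations of the coefficient sequence of a real polynomial. -/
noncomputable def signVar (P : Polynomial ℝ) : ℕ :=
  signVarList ((List.range (P.natDegree + 1)).map P.coeff)

lemma prod_sign : ∀ l : List ℝ, (∀ x ∈ l, 0 < x) →
    (l.map (fun a => X - C a)).prod.Monic ∧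
    (l.map (fun a => X - C a)).prod.natDegree = l.length ∧
    ∀ k ≤ l.length, 0 < (-1:ℝ)^(l.length - k) * (l.map (fun a => X - C a)).prod.coeff k := by
  intro l
  induction l with
  | nil =>
    intro _
    refine ⟨monic_one, by simp, ?_⟩
    intro k hk
    simp only [List.length_nil, Nat.le_zero] at hk
    subst hk
    simp
  | cons a t ih =>
    intro h
    obtain ⟨hM, hd, hs⟩ := ih (fun x hx => h x (List.mem_cons_of_mem _ hx))
    have ha : 0 < a := h a (List.mem_cons_self)
    set Q := (t.map (fun a => X - C a)).prod with hQ
    have hM' : ((a :: t).map (fun a => X - C a)).prod.Monic := by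
      simp only [List.map_cons, List.prod_cons]
      exact (monic_X_sub_C a).mul hM
    refine ⟨hM', ?_, ?_⟩
    · simp only [List.map_cons, List.prod_cons, List.length_cons]
      rw [(monic_X_sub_C a).natDegree_mul hM, natDegree_X_sub_C, hd]
      omega
    · intro k hk
      simp only [List.length_cons] at hk
      simp only [List.map_cons, List.prod_cons, List.length_cons]
      have hcoeff : ∀ n, ((X - C a) * Q).coeff n = (X*Q).coeff n - a * Q.coeff n := by
        intro n
        rw [sub_mul, coeff_sub, coeff_C_mul]
      cases k with
      | zero =>
        have h0 := hs 0 (Nat.zero_le _)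
        rw [hcoeff, Nat.sub_zero, pow_succ]
        have hx0 : (X*Q).coeff 0 = 0 := by
          rw [mul_coeff_zero, coeff_X_zero, zero_mul]
        rw [hx0]
        rw [Nat.sub_zero] at h0
        nlinarith [mul_pos ha h0]
      | succ k =>
        have hk' : k ≤ t.length := by omega
        have h1 := hs k hk'
        rw [hcoeff, coeff_X_mul]
        have hexp : t.length + 1 - (k+1) = t.length - k := by omega
        rw [hexp, mul_sub]
        rcases Nat.lt_or_ge k t.length with hlt | hge
        · have h2 := hs (k+1) hlt
          rw [show t.length - k = (t.length - (k+1)) + 1 from by omega, pow_succ] at h1 ⊢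
          nlinarith [mul_pos ha h2]
        · have hz : Q.coeff (k+1) = 0 := by
            apply coeff_eq_zero_of_natDegree_lt
            omega
          rw [hz]
          simpa using h1

lemma countP_zip_tail (p : ℝ × ℝ → Bool) :
    ∀ l : List ℝ, l.Chain' (fun a b => p (a, b) = true) →
      (l.zip l.tail).countP p = l.length - 1 := by
  intro l
  induction l with
  | nil => intro _; simp
  | cons a t ih =>
    cases t with
    | nil => intro _; simp
    | cons b t' =>
      intro h
      rw [List.Chain', List.isChain_cons_cons] at h
      simp only [List.tail_cons] at ih
      rw [List.tail_cons, List.zip_cons_cons, List.countP_cons, ih h.2]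
      simp [h.1, List.length_cons]

theorem stmt11 (m : ℕ) (a : Fin m → ℝ) (ha : ∀ i, 0 < a i) :
    signVar (∏ i : Fin m, (X - C (a i))) = m := by
  set P : Polynomial ℝ := ∏ i : Fin m, (X - C (a i)) with hP
  have hpos : ∀ x ∈ List.ofFn a, 0 < x := by
    intro x hx
    obtain ⟨i, rfl⟩ := List.mem_ofFn.mp hx
    exact ha i
  obtain ⟨hM, hd, hs⟩ := prod_sign (List.ofFn a) hpos
  have hPeq : ((List.ofFn a).map (fun x => X - C x)).prod = P := by
    rw [List.map_ofFn, List.prod_ofFn]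
    rfl
  rw [hPeq, List.length_ofFn] at hd hs
  -- coefficients are nonzero
  have hne : ∀ k ≤ m, P.coeff k ≠ 0 := by
    intro k hk h0
    have := hs k hk
    rw [h0, mul_zero] at this
    exact lt_irrefl 0 this
  -- adjacent coefficients have opposite signs
  have hadj : ∀ k < m, P.coeff k * P.coeff (k+1) < 0 := by
    intro k hk
    have h1 := hs k (le_of_lt hk)
    have h2 := hs (k+1) hk
    rw [show m - k = (m - (k+1)) + 1 from by omega, pow_succ] at h1
    have hcases : ((-1:ℝ))^(m - (k+1)) = 1 ∨ ((-1:ℝ))^(m - (k+1)) = -1 := by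
      rcases Nat.even_or_odd (m - (k+1)) with he | ho
      · exact Or.inl (Even.neg_one_pow he)
      · exact Or.inr (Odd.neg_one_pow ho)
    rcases hcases with hf | hf
    · rw [hf] at h1 h2
      nlinarith
    · rw [hf] at h1 h2
      nlinarith
  -- the filtered list equals the full coefficient list
  unfold signVar signVarList
  rw [hd]
  have hfilter : ((List.range (m + 1)).map P.coeff).filter (fun x => decide (x ≠ 0))
      = (List.range (m + 1)).map P.coeff := by
    apply List.filter_eq_self.mpr
    intro x hx
    obtain ⟨k, hk, rfl⟩ := List.mem_map.mp hx
    rw [List.mem_range] at hk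
    simp [hne k (by omega)]
  simp only [hfilter]
  have hchain : ((List.range (m + 1)).map P.coeff).Chain'
      (fun x y => (fun p : ℝ × ℝ => decide (p.1 * p.2 < 0)) (x, y) = true) := by
    rw [List.Chain', List.isChain_map]
    rw [List.isChain_range_succ]
    intro k hk
    simpa using hadj k hk
  rw [countP_zip_tail _ _ hchain]
  simp
end

section
/- Let q ≥ 1 and let M(x) = Σ_{i=0}^p r_i x^{qi} be a real polynomial with r_p = 1 (so M is monic of degree pq and only powers of x^q appear). Let L(x) = Σ_{j=0}^{q-1} s_j x^j be a polynomial of degree q-1 with all coefficients s_j > 0. Then the number of sign variations of L·M equals the number of sign variations of M. -/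
open Polynomial

/-- Count of sign changes in a list (no filtering). -/
noncomputable def chg (l : List ℝ) : ℕ :=
  (l.zip l.tail).countP (fun p => decide (p.1 * p.2 < 0))

lemma signVarList_eq_chg (l : List ℝ) :
    signVarList l = chg (l.filter (fun x => decide (x ≠ 0))) := rfl

lemma signVar_eq_chg (Q : Polynomial ℝ) :
    signVar Q = chg (((List.range (Q.natDegree + 1)).map Q.coeff).filter
      (fun x => decide (x ≠ 0))) := rfl

lemma chg_cons_cons (x y : ℝ) (l : List ℝ) :
    chg (x :: y :: l) = (if x * y < 0 then 1 else 0) + chg (y :: l) := by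
  simp [chg, List.countP_cons, Nat.add_comm]

lemma chg_same (x : ℝ) : ∀ (B : List ℝ), (∀ b ∈ B, 0 < b * x) → chg B = 0
  | [], _ => rfl
  | [_], _ => rfl
  | b :: b' :: B, h => by
    rw [chg_cons_cons]
    have h1 := h b (by simp)
    have h2 := h b' (by simp)
    have hn : ¬ b * b' < 0 := by nlinarith [mul_pos h1 h2, sq_nonneg x]
    rw [if_neg hn, chg_same x (b' :: B) (fun c hc => h c (by simp [hc]))]

lemma chg_append (x : ℝ) : ∀ (B : List ℝ), B ≠ [] → (∀ b ∈ B, 0 < b * x) →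
    ∀ (y : ℝ) (l : List ℝ),
      chg (B ++ y :: l) = (if x * y < 0 then 1 else 0) + chg (y :: l)
  | [], h, _ => absurd rfl h
  | [b], _, hB => by
    intro y l
    have h1 := hB b (by simp)
    simp only [List.singleton_append, chg_cons_cons]
    congr 1
    have hiff : b * y < 0 ↔ x * y < 0 := by
      constructor <;> intro h' <;> nlinarith [mul_pos h1 h1, sq_nonneg b, sq_nonneg x,
        mul_neg_of_pos_of_neg h1 h', mul_pos h1 h1]
    simp [hiff]
  | b :: b' :: B, _, hB => by
    intro y l
    have h1 := hB b (by simp)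
    have h2 := hB b' (by simp)
    have hn : ¬ b * b' < 0 := by nlinarith [mul_pos h1 h2, sq_nonneg x]
    rw [List.cons_append, List.cons_append, chg_cons_cons, if_neg hn,
      show (b' :: (B ++ y :: l)) = (b' :: B) ++ y :: l from rfl,
      chg_append x (b' :: B) (by simp) (fun c hc => hB c (by simp at hc ⊢; tauto)) y l,
      Nat.zero_add]

lemma range_succ_left (n : ℕ) :
    List.range (n + 1) = 0 :: (List.range n).map (· + 1) := by
  rw [show n + 1 = 1 + n by omega, List.range_add,
    show List.range 1 = [0] from rfl]
  simp [Nat.add_comm]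

lemma chg_flatMap (q : ℕ) (hq : 1 ≤ q) (s : ℕ → ℝ) (hs : ∀ j < q, 0 < s j) :
    ∀ (xs : List ℝ), (∀ x ∈ xs, x ≠ 0) →
      chg (xs.flatMap (fun x => (List.range q).map (fun j => x * s j))) = chg xs
  | [], _ => rfl
  | [x], h => by
    simp only [List.flatMap_cons, List.flatMap_nil, List.append_nil]
    rw [chg_same x]
    · rfl
    · intro b hb
      simp only [List.mem_map, List.mem_range] at hb
      obtain ⟨j, hj, rfl⟩ := hb
      have hx : x ≠ 0 := h x (by simp)
      nlinarith [mul_self_pos.mpr hx, hs j hj]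
  | x :: y :: xs, h => by
    have hx : x ≠ 0 := h x (by simp)
    obtain ⟨q', rfl⟩ : ∃ q', q = q' + 1 := ⟨q - 1, by omega⟩
    have hrest : ((y :: xs).flatMap (fun x => (List.range (q' + 1)).map (fun j => x * s j)))
        = (y * s 0) :: ((List.range q').map (fun j => y * s (j + 1)) ++
            xs.flatMap (fun x => (List.range (q' + 1)).map (fun j => x * s j))) := by
      rw [List.flatMap_cons, range_succ_left]
      simp [List.map_map, Function.comp]
    rw [List.flatMap_cons, hrest,
      chg_append x ((List.range (q' + 1)).map (fun j => x * s j))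
        (by simp)
        (by
          intro b hb
          simp only [List.mem_map, List.mem_range] at hb
          obtain ⟨j, hj, rfl⟩ := hb
          nlinarith [mul_self_pos.mpr hx, hs j hj]),
      ← hrest, chg_flatMap (q' + 1) hq s hs (y :: xs) (fun c hc => h c (by simp at hc ⊢; tauto)),
      chg_cons_cons]
    congr 1
    have hs0 : 0 < s 0 := hs 0 (by omega)
    have hiff : x * (y * s 0) < 0 ↔ x * y < 0 := by
      constructor <;> intro h' <;> nlinarith
    simp [hiff]

lemma filter_flatMap_blow (q : ℕ) (s : ℕ → ℝ) (hs : ∀ j < q, 0 < s j) (xs : List ℝ) :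
    (xs.flatMap (fun x => (List.range q).map (fun j => x * s j))).filter
        (fun x => decide (x ≠ 0))
      = (xs.filter (fun x => decide (x ≠ 0))).flatMap
          (fun x => (List.range q).map (fun j => x * s j)) := by
  induction xs with
  | nil => rfl
  | cons x xs ih =>
    rw [List.flatMap_cons, List.filter_append, ih]
    by_cases hx : x = 0
    · subst hx
      have h0 : ((List.range q).map (fun j => (0:ℝ) * s j)).filter
          (fun x => decide (x ≠ 0)) = [] := by
        simp [List.filter_map, Function.comp]
      rw [h0, List.filter_cons_of_neg (by simp), List.nil_append]
    · have h1 : ((List.range q).map (fun j => x * s j)).filter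
          (fun x => decide (x ≠ 0)) = (List.range q).map (fun j => x * s j) := by
        rw [List.filter_eq_self]
        intro a ha
        simp only [List.mem_map, List.mem_range] at ha
        obtain ⟨j, hj, rfl⟩ := ha
        simp [mul_ne_zero hx (ne_of_gt (hs j hj))]
      rw [h1, List.filter_cons_of_pos (by simp [hx]), List.flatMap_cons]

lemma range_mul_map (q : ℕ) : ∀ (k : ℕ) (f : ℕ → ℝ) (g : ℕ → ℕ → ℝ),
    (∀ i j, i < k → j < q → f (q * i + j) = g i j) →
    (List.range (q * k)).map f = (List.range k).flatMap (fun i => (List.range q).map (g i))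
  | 0, f, g, _ => by simp
  | (k + 1), f, g, h => by
    rw [Nat.mul_succ, List.range_add, List.map_append, List.range_succ, List.flatMap_append,
      range_mul_map q k f g (fun i j hi hj => h i j (by omega) hj), List.flatMap_singleton,
      List.map_map]
    congr 1
    apply List.map_congr_left
    intro j hj
    exact h k j (by omega) (List.mem_range.mp hj)

lemma filter_map_eq_flatMap (f : ℕ → ℝ) :
    ∀ l : List ℕ, ((l.map f).filter (fun x => decide (x ≠ 0)))
      = l.flatMap (fun i => [f i].filter (fun x => decide (x ≠ 0)))
  | [] => rfl
  | a :: l => by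
    rw [List.map_cons, List.filter_cons, List.flatMap_cons,
      ← filter_map_eq_flatMap f l]
    by_cases h : f a = 0 <;> simp [h, List.filter_cons]

theorem stmt14 (p q : ℕ) (hq : 1 ≤ q) (r : ℕ → ℝ) (hr : r p = 1)
    (s : ℕ → ℝ) (hs : ∀ j < q, 0 < s j)
    (M L : Polynomial ℝ)
    (hM : M = ∑ i ∈ Finset.range (p + 1), C (r i) * X ^ (q * i))
    (hL : L = ∑ j ∈ Finset.range q, C (s j) * X ^ j) :
    signVar (L * M) = signVar M := by
  have hq0 : 0 < q := hq
  -- coefficient facts for M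
  have hMcoeff : ∀ n, M.coeff n = ∑ i ∈ Finset.range (p + 1), if n = q * i then r i else 0 := by
    intro n
    rw [hM, finset_sum_coeff]
    simp [coeff_C_mul, coeff_X_pow]
  have hMc : ∀ i, i ≤ p → M.coeff (q * i) = r i := by
    intro i hi
    rw [hMcoeff, Finset.sum_eq_single i]
    · simp
    · intro b _ hb
      rw [if_neg]
      intro hEq
      exact hb (Nat.eq_of_mul_eq_mul_left hq0 hEq).symm
    · intro hmem
      exact absurd (Finset.mem_range.mpr (by omega)) hmem
  have hMz : ∀ n, (∀ i, i ≤ p → n ≠ q * i) → M.coeff n = 0 := by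
    intro n hn
    rw [hMcoeff]
    apply Finset.sum_eq_zero
    intro i hi
    exact if_neg (hn i (by simpa using Nat.lt_succ_iff.mp (Finset.mem_range.mp hi)))
  -- coefficient facts for L
  have hLcoeff : ∀ n, L.coeff n = ∑ j ∈ Finset.range q, if n = j then s j else 0 := by
    intro n
    rw [hL, finset_sum_coeff]
    simp [coeff_C_mul, coeff_X_pow]
  have hLc : ∀ j, j < q → L.coeff j = s j := by
    intro j hj
    rw [hLcoeff, Finset.sum_eq_single j]
    · simp
    · intro b _ hb
      exact if_neg (fun hEq => hb hEq.symm)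
    · intro hmem
      exact absurd (Finset.mem_range.mpr hj) hmem
  have hLz : ∀ n, q ≤ n → L.coeff n = 0 := by
    intro n hn
    rw [hLcoeff]
    apply Finset.sum_eq_zero
    intro j hj
    exact if_neg (by have := Finset.mem_range.mp hj; omega)
  -- degrees
  have hM1 : M.coeff (q * p) = 1 := by rw [hMc p le_rfl, hr]
  have hMne : M ≠ 0 := fun h => by simp [h] at hM1
  have hMdeg : M.natDegree = q * p := by
    apply le_antisymm
    · rw [natDegree_le_iff_coeff_eq_zero]
      intro N hN
      apply hMz
      intro i hi hEq
      have : q * i ≤ q * p := Nat.mul_le_mul_left q hi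
      omega
    · exact le_natDegree_of_ne_zero (by rw [hM1]; exact one_ne_zero)
  have hLq : L.coeff (q - 1) = s (q - 1) := hLc (q - 1) (by omega)
  have hLne : L ≠ 0 := fun h => by
    have := hs (q - 1) (by omega)
    rw [h, coeff_zero] at hLq
    linarith [hLq ▸ this]
  have hLdeg : L.natDegree = q - 1 := by
    apply le_antisymm
    · rw [natDegree_le_iff_coeff_eq_zero]
      intro N hN
      exact hLz N (by omega)
    · apply le_natDegree_of_ne_zero
      rw [hLq]
      exact ne_of_gt (hs (q - 1) (by omega))
  have hLMdeg : (L * M).natDegree + 1 = q * (p + 1) := by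
    rw [natDegree_mul hLne hMne, hLdeg, hMdeg]
    have : q * (p + 1) = q * p + q := by ring
    omega
  -- coefficients of L * M
  have hLMco : ∀ i j, i ≤ p → j < q → (L * M).coeff (q * i + j) = r i * s j := by
    intro i j hi hj
    rw [hL, hM, Finset.sum_mul_sum]
    rw [finset_sum_coeff]
    have hterm : ∀ j' i', (C (s j') * X ^ j' * (C (r i') * X ^ (q * i'))).coeff (q * i + j)
        = if q * i + j = q * i' + j' then s j' * r i' else 0 := by
      intro j' i'
      have : C (s j') * X ^ j' * (C (r i') * X ^ (q * i')) = C (s j' * r i') * X ^ (q * i' + j') := by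
        rw [C_mul]
        ring
      rw [this, coeff_C_mul, coeff_X_pow, mul_ite, mul_one, mul_zero]
    have hsum : ∀ j' ∈ Finset.range q,
        (∑ i' ∈ Finset.range (p + 1), (C (s j') * X ^ j' * (C (r i') * X ^ (q * i')))).coeff (q * i + j)
          = if j' = j then r i * s j else 0 := by
      intro j' hj'
      have hj'q := Finset.mem_range.mp hj'
      rw [finset_sum_coeff]
      by_cases hjj : j' = j
      · subst hjj
        rw [if_pos rfl, Finset.sum_eq_single i]
        · rw [hterm, if_pos rfl, mul_comm]
        · intro b _ hb
          rw [hterm, if_neg]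
          intro hEq
          have : i = b := Nat.eq_of_mul_eq_mul_left hq0 (by omega)
          exact hb this.symm
        · intro hmem
          exact absurd (Finset.mem_range.mpr (by omega)) hmem
      · rw [if_neg hjj]
        apply Finset.sum_eq_zero
        intro i' _
        rw [hterm, if_neg]
        intro hEq
        have h1 : (q * i + j) % q = j := by rw [Nat.mul_add_mod]; exact Nat.mod_eq_of_lt hj
        have h2 : (q * i' + j') % q = j' := by rw [Nat.mul_add_mod]; exact Nat.mod_eq_of_lt hj'q
        rw [hEq, h2] at h1
        exact hjj h1
    rw [Finset.sum_congr rfl hsum, Finset.sum_ite_eq' (Finset.range q) j (fun _ => r i * s j),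
      if_pos (Finset.mem_range.mpr hj)]
  -- LHS
  have key1 : signVar (L * M)
      = chg ((((List.range (p + 1)).map r).filter (fun x => decide (x ≠ 0))).flatMap
          (fun x => (List.range q).map (fun j => x * s j))) := by
    rw [signVar_eq_chg, hLMdeg,
      range_mul_map q (p + 1) (L * M).coeff (fun i j => r i * s j)
        (fun i j hi hj => hLMco i j (by omega) hj),
      show ((List.range (p + 1)).flatMap fun i => (List.range q).map (fun j => r i * s j))
          = ((List.range (p + 1)).map r).flatMap (fun x => (List.range q).map (fun j => x * s j))
        by rw [List.flatMap_map],
      filter_flatMap_blow q s hs]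
  rw [key1, chg_flatMap q hq s hs _ (by
    intro x hx
    have := List.of_mem_filter hx
    simpa using this)]
  -- RHS
  rw [signVar_eq_chg, hMdeg]
  have hMblocks : (List.range (q * p)).map M.coeff
      = (List.range p).flatMap (fun i => (List.range q).map
          (fun j => if j = 0 then r i else 0)) := by
    apply range_mul_map
    intro i j hi hj
    by_cases hj0 : j = 0
    · subst hj0
      rw [if_pos rfl, Nat.add_zero, hMc i (by omega)]
    · rw [if_neg hj0]
      apply hMz
      intro i' _ hEq
      have h1 : (q * i + j) % q = j := by rw [Nat.mul_add_mod]; exact Nat.mod_eq_of_lt hj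
      have h2 : (q * i') % q = 0 := Nat.mul_mod_right q i'
      rw [hEq, h2] at h1
      exact hj0 h1.symm
  have hblock : ∀ i, ((List.range q).map (fun j => if j = 0 then r i else (0:ℝ))).filter
      (fun x => decide (x ≠ 0)) = [r i].filter (fun x => decide (x ≠ 0)) := by
    intro i
    obtain ⟨q', rfl⟩ : ∃ q', q = q' + 1 := ⟨q - 1, by omega⟩
    rw [range_succ_left, List.map_cons, List.map_map]
    have hcomp : ((fun j => if j = 0 then r i else (0:ℝ)) ∘ (· + 1)) = fun _ => (0:ℝ) := by
      funext j; simp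
    rw [hcomp, if_pos rfl, List.filter_cons, List.filter_cons]
    have hz : (List.filter (fun x => decide (x ≠ 0)) ((List.range q').map fun _ => (0:ℝ))) = [] := by
      simp [List.filter_map, Function.comp]
    rw [hz]
    by_cases h : r i = 0 <;> simp [h]
  have hfilt : ((List.range (q * p + 1)).map M.coeff).filter (fun x => decide (x ≠ 0))
      = ((List.range (p + 1)).map r).filter (fun x => decide (x ≠ 0)) := by
    rw [List.range_succ, List.map_append, List.filter_append, hMblocks, List.filter_flatMap]
    simp only [hblock]
    rw [← filter_map_eq_flatMap r (List.range p),
      show List.range (p + 1) = List.range p ++ [p] from List.range_succ,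
      List.map_append, List.filter_append]
    congr 1
    rw [List.map_singleton, List.map_singleton, hMc p le_rfl]
  rw [hfilt]
end

section
/- Let α₁, ..., α_p be positive reals and q ≥ 1. Then the polynomial ∏_{i=1}^p (x^q - α_i^q) has exactly p sign variations in its coefficient sequence. -/
open Polynomial

lemma chain_count (x : ℝ) (l : List ℝ)
    (h : List.Chain (fun a b : ℝ => a * b < 0) x l) :
    ((x :: l).zip l).countP (fun p => decide (p.1 * p.2 < 0)) = l.length := by
  induction l generalizing x with
  | nil => simp
  | cons y l ih =>
    simp only [List.Chain] at h
    rw [List.chain_cons] at h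
    simp [List.countP_cons, h.1, ih y h.2]

lemma signVarList_chain (l : List ℝ) (hnz : ∀ y ∈ l, y ≠ 0)
    (h : List.Chain' (fun a b : ℝ => a * b < 0) l) :
    signVarList l = l.length - 1 := by
  unfold signVarList
  rw [List.filter_eq_self.mpr (fun y hy => by simpa using hnz y hy)]
  cases l with
  | nil => simp
  | cons x l => simpa using chain_count x l h

lemma not_dvd_aux (q n i : ℕ) (hq : 1 ≤ q) (hi : i < q - 1) : ¬ q ∣ (q * n + 1 + i) := by
  rw [Nat.dvd_iff_mod_eq_zero]
  have h : q * n + 1 + i = (1 + i) + n * q := by ring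
  rw [h, Nat.add_mul_mod_self_right, Nat.mod_eq_of_lt (by omega)]
  omega

lemma filter_expand (q : ℕ) (hq : 1 ≤ q) (G : ℕ → ℝ) (n : ℕ) :
    (((List.range (q * n + 1)).map (fun m => if q ∣ m then G (m / q) else 0)).filter
        (fun x => decide (x ≠ 0)))
      = (((List.range (n + 1)).map G).filter (fun x => decide (x ≠ 0))) := by
  induction n with
  | zero => simp [List.range_succ]
  | succ n ih =>
    have h1 : q * (n + 1) + 1 = (q * n + 1) + q := by ring
    rw [h1, List.range_add, List.map_append, List.filter_append, ih,
      List.range_succ (n := n + 1), List.map_append, List.filter_append, List.map_map]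
    congr 1
    have hblock : (List.range q).map
        ((fun m => if q ∣ m then G (m / q) else 0) ∘ (fun i => q * n + 1 + i))
        = List.replicate (q - 1) (0:ℝ) ++ [G (n + 1)] := by
      obtain ⟨r, rfl⟩ : ∃ r, q = r + 1 := ⟨q - 1, by omega⟩
      rw [List.range_succ, List.map_append]
      congr 1
      · rw [List.eq_replicate_iff]
        refine ⟨by simp, ?_⟩
        intro b hb
        simp only [List.mem_map, List.mem_range, Function.comp_apply] at hb
        obtain ⟨i, hi, rfl⟩ := hb
        simp [not_dvd_aux (r+1) n i (by omega) (by omega)]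
      · have hd : (r+1) ∣ (r+1) * n + 1 + r := ⟨n + 1, by ring⟩
        have he : ((r+1) * n + 1 + r) / (r+1) = n + 1 := by
          have h2 : (r+1) * n + 1 + r = (r+1) * (n + 1) := by ring
          rw [h2, Nat.mul_div_cancel_left _ (by omega)]
        simp [hd, he]
    rw [hblock, List.filter_append]
    simp [List.filter_replicate]

lemma msum_pos (t : Multiset ℝ) (h : ∀ x ∈ t, 0 < x) (ht : t ≠ 0) : 0 < t.sum := by
  obtain ⟨x, hx⟩ := Multiset.exists_mem_of_ne_zero ht
  rw [← Multiset.cons_erase hx, Multiset.sum_cons]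
  exact add_pos_of_pos_of_nonneg (h x hx)
    (Multiset.sum_nonneg fun y hy => (h y (Multiset.mem_of_mem_erase hy)).le)

lemma esymm_pos (s : Multiset ℝ) (hs : ∀ x ∈ s, 0 < x) (j : ℕ)
    (hj : j ≤ Multiset.card s) : 0 < s.esymm j := by
  unfold Multiset.esymm
  apply msum_pos
  · intro x hx
    simp only [Multiset.mem_map] at hx
    obtain ⟨t, ht, rfl⟩ := hx
    rw [Multiset.mem_powersetCard] at ht
    exact Multiset.prod_pos fun y hy => hs y (Multiset.mem_of_le ht.1 hy)
  · intro h0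
    rw [Multiset.map_eq_zero] at h0
    have h1 := Multiset.card_powersetCard j s
    rw [h0] at h1
    have h2 := Nat.choose_pos hj
    simp at h1
    omega

theorem stmt16 (p q : ℕ) (hq : 1 ≤ q) (a : Fin p → ℝ) (ha : ∀ i, 0 < a i) :
    signVar (∏ i : Fin p, (X ^ q - C ((a i) ^ q))) = p := by
  set s : Multiset ℝ := Finset.univ.val.map (fun i => a i ^ q) with hs_def
  have hs_pos : ∀ x ∈ s, 0 < x := by
    intro x hx
    simp only [hs_def, Multiset.mem_map] at hx
    obtain ⟨i, _, rfl⟩ := hx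
    exact pow_pos (ha i) q
  have hcard : Multiset.card s = p := by simp [hs_def]
  set Q : ℝ[X] := ∏ i : Fin p, (X - C (a i ^ q)) with hQ_def
  have hQs : Q = (s.map fun t => X - C t).prod := by
    rw [hQ_def, Finset.prod_eq_multiset_prod, hs_def, Multiset.map_map]
    rfl
  have hcoeff : ∀ k, k ≤ p → Q.coeff k = (-1)^(p - k) * s.esymm (p - k) := by
    intro k hk
    rw [hQs, Multiset.prod_X_sub_C_coeff s (hcard ▸ hk), hcard]
  have hQdeg : Q.natDegree = p := by
    rw [hQ_def, Polynomial.natDegree_prod _ _ (fun i _ => X_sub_C_ne_zero _)]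
    simp only [natDegree_X_sub_C, Finset.sum_const, Finset.card_univ, Fintype.card_fin, smul_eq_mul, mul_one]
  have hP : (∏ i : Fin p, (X ^ q - C ((a i) ^ q))) = Polynomial.expand ℝ q Q := by
    rw [hQ_def, map_prod]
    congr 1
    ext i : 1
    rw [map_sub, Polynomial.expand_X, Polynomial.expand_C]
  rw [hP]
  unfold signVar
  rw [Polynomial.natDegree_expand, hQdeg]
  have hmap : (List.range (q * p + 1)).map (Polynomial.expand ℝ q Q).coeff
      = (List.range (q * p + 1)).map (fun m => if q ∣ m then Q.coeff (m / q) else 0) :=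
    List.map_congr_left fun m _ => Polynomial.coeff_expand (by omega) Q m
  rw [mul_comm p q, hmap]
  unfold signVarList
  rw [filter_expand q hq Q.coeff p]
  have hnz : ∀ y ∈ (List.range (p + 1)).map Q.coeff, y ≠ 0 := by
    intro y hy
    simp only [List.mem_map, List.mem_range] at hy
    obtain ⟨k, hk, rfl⟩ := hy
    rw [hcoeff k (by omega)]
    exact mul_ne_zero (pow_ne_zero _ (by norm_num))
      (esymm_pos s hs_pos (p - k) (by omega)).ne'
  have hchain : List.Chain' (fun x y : ℝ => x * y < 0) ((List.range (p + 1)).map Q.coeff) := by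
    simp only [List.Chain']
    rw [List.isChain_map, List.isChain_range_succ]
    intro m hm
    have hj : p - m = (p - (m + 1)) + 1 := by omega
    set j := p - (m + 1) with hjdef
    have h1 : Q.coeff m = (-1)^(j+1) * s.esymm (j+1) := by
      rw [hcoeff m (by omega), ← hj]
    have h2 : Q.coeff (m+1) = (-1)^j * s.esymm j := by
      rw [hcoeff (m+1) (by omega)]
    have hsgn : ((-1:ℝ))^(j+1) * (-1)^j = -1 := by
      rw [← pow_add]
      exact Odd.neg_one_pow ⟨j, by ring⟩
    have hE1 := esymm_pos s hs_pos (j+1) (by omega)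
    have hE2 := esymm_pos s hs_pos j (by omega)
    calc Q.coeff m * Q.coeff (m+1)
        = ((-1:ℝ)^(j+1) * (-1)^j) * (s.esymm (j+1) * s.esymm j) := by
          rw [h1, h2]; ring
      _ = -(s.esymm (j+1) * s.esymm j) := by rw [hsgn]; ring
      _ < 0 := neg_neg_iff_pos.mpr (mul_pos hE1 hE2) |>.le.lt_of_ne (by
          exact (neg_lt_zero.mpr (mul_pos hE1 hE2)).ne)
  have := signVarList_chain ((List.range (p + 1)).map Q.coeff) hnz hchain
  unfold signVarList at this
  simpa using this
end

section
/- Let F be a real polynomial and let p be the number of positive real roots of F counted with multiplicity. Then V(F) ≥ p and V(F) - p is even, where V(F) is the number of sign variations of the coefficient sequence of F. -/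
open Polynomial

section Aux

lemma filter_eq_self_of_ne {l : List ℝ} (h : ∀ x ∈ l, x ≠ 0) :
    l.filter (fun x => decide (x ≠ 0)) = l :=
  List.filter_eq_self.mpr (by simpa using h)

lemma signVarList_cons_cons {a b : ℝ} {l : List ℝ} (ha : a ≠ 0) (hb : b ≠ 0)
    (hl : ∀ x ∈ l, x ≠ 0) :
    signVarList (a :: b :: l) = (if a * b < 0 then 1 else 0) + signVarList (b :: l) := by
  have h2 : ∀ x ∈ (b :: l), x ≠ 0 := by
    intro x hx; rcases List.mem_cons.1 hx with rfl | hx; · exact hb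
    exact hl x hx
  have h1 : ∀ x ∈ (a :: b :: l), x ≠ 0 := by
    intro x hx; rcases List.mem_cons.1 hx with rfl | hx; · exact ha
    exact h2 x hx
  simp only [signVarList, filter_eq_self_of_ne h1, filter_eq_self_of_ne h2]
  simp [List.zip, List.countP_cons, Nat.add_comm]

lemma even_signVarList : ∀ (l : List ℝ) (a : ℝ), a ≠ 0 → (∀ x ∈ l, x ≠ 0) →
    (Even (signVarList (a :: l)) ↔ 0 < a * (a :: l).getLast (List.cons_ne_nil a l)) := by
  intro l
  induction l with
  | nil =>
    intro a ha _
    simp [signVarList, List.filter, decide_eq_true_eq, ha, mul_self_pos]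
  | cons b l ih =>
    intro a ha hl
    have hb : b ≠ 0 := hl b (by simp)
    have hl' : ∀ x ∈ l, x ≠ 0 := fun x hx => hl x (List.mem_cons_of_mem _ hx)
    have hc : (b :: l).getLast (List.cons_ne_nil b l) ≠ 0 :=
      hl _ (List.getLast_mem _)
    set c := (b :: l).getLast (List.cons_ne_nil b l) with hcdef
    have hlast : (a :: b :: l).getLast (List.cons_ne_nil _ _) = c := by
      rw [List.getLast_cons (List.cons_ne_nil b l)]
    rw [signVarList_cons_cons ha hb hl', hlast]
    have hib := ih b hb hl'
    rw [← hcdef] at hib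
    have hbc : b * c ≠ 0 := mul_ne_zero hb hc
    rcases lt_or_gt_of_ne (mul_ne_zero ha hb) with h | h
    · rw [if_pos h, Nat.add_comm, Nat.even_add_one, hib]
      constructor
      · intro h2
        have h3 : b * c < 0 := lt_of_le_of_ne (not_lt.mp h2) hbc
        nlinarith [mul_pos_of_neg_of_neg h h3, sq_nonneg b]
      · intro h2 h3
        nlinarith [mul_pos h2 h3, sq_nonneg c]
    · rw [if_neg (by linarith : ¬ a * b < 0), Nat.zero_add, hib]
      constructor
      · intro h2; nlinarith [mul_pos h h2, sq_nonneg a, sq_nonneg b]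
      · intro h2; nlinarith [mul_pos h h2, sq_nonneg a, sq_nonneg b]

lemma signVarList_filter (l : List ℝ) :
    signVarList (l.filter (fun x => decide (x ≠ 0))) = signVarList l := by
  simp [signVarList, List.filter_filter]

/-- same sign relation -/
def SameSign (x y : ℝ) : Prop := (0 < x ∧ 0 < y) ∨ (x < 0 ∧ y < 0) ∨ (x = 0 ∧ y = 0)

lemma sameSign_ne {x y : ℝ} (h : SameSign x y) : x ≠ 0 ↔ y ≠ 0 := by
  rcases h with ⟨h1,h2⟩|⟨h1,h2⟩|⟨h1,h2⟩ <;> constructor <;> intro <;> first | linarith | simp_all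

lemma sameSign_mul {x y x' y' : ℝ} (h : SameSign x x') (h' : SameSign y y') :
    x * y < 0 ↔ x' * y' < 0 := by
  rcases h with ⟨h1,h2⟩|⟨h1,h2⟩|⟨h1,h2⟩ <;> rcases h' with ⟨g1,g2⟩|⟨g1,g2⟩|⟨g1,g2⟩ <;>
    constructor <;> intro hh <;> subst_vars <;>
    first
      | nlinarith
      | simp_all

lemma forall₂_filter {l₁ l₂ : List ℝ} (h : List.Forall₂ SameSign l₁ l₂) :
    List.Forall₂ SameSign (l₁.filter (fun x => decide (x ≠ 0)))
      (l₂.filter (fun x => decide (x ≠ 0))) := by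
  induction h with
  | nil => simp
  | cons hxy _ ih =>
    rename_i x y l₁' l₂' _
    by_cases hx : x = 0
    · have hy : y = 0 := by
        have := sameSign_ne hxy; tauto
      simpa [hx, hy] using ih
    · have hy : y ≠ 0 := (sameSign_ne hxy).mp hx
      simpa [hx, hy] using List.Forall₂.cons hxy ih

lemma countP_zip_eq {l₁ l₂ : List ℝ} (h : List.Forall₂ SameSign l₁ l₂) :
    (l₁.zip l₁.tail).countP (fun p => decide (p.1 * p.2 < 0)) =
    (l₂.zip l₂.tail).countP (fun p => decide (p.1 * p.2 < 0)) := by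
  induction h with
  | nil => rfl
  | cons hxy htail ih =>
    rename_i x y l₂'
    cases htail with
    | nil => rfl
    | cons hab htail' =>
      rename_i a b t₁ t₂
      simp only [List.tail_cons, List.zip_cons_cons, List.countP_cons] at ih ⊢
      rw [ih]
      congr 1
      simp [sameSign_mul hxy hab]

lemma signVarList_congr {l₁ l₂ : List ℝ} (h : List.Forall₂ SameSign l₁ l₂) :
    signVarList l₁ = signVarList l₂ :=
  countP_zip_eq (forall₂_filter h)

lemma signVarList_le_cons (a : ℝ) (l : List ℝ) :
    signVarList l ≤ signVarList (a :: l) := by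
  by_cases ha : a = 0
  · simp [signVarList, List.filter_cons, ha]
  · simp only [signVarList, List.filter_cons, ha, ne_eq, not_false_eq_true, decide_true, if_true]
    cases hf : l.filter (fun x => decide (x ≠ 0)) with
    | nil => simp
    | cons b t => simp only [List.tail_cons, List.zip_cons_cons, List.countP_cons]; omega

lemma coeffList_filter_eq (F : Polynomial ℝ) (hF : F ≠ 0) :
    ∃ rest : List ℝ,
      ((List.range (F.natDegree + 1)).map F.coeff).filter (fun x => decide (x ≠ 0)) =
        F.trailingCoeff :: rest := by
  set n := F.natDegree
  set t := F.natTrailingDegree with ht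
  have htn : t ≤ n := natTrailingDegree_le_natDegree F
  have hsplit : n + 1 = t + (n + 1 - t) := by omega
  have h2 : n + 1 - t = (n - t) + 1 := by omega
  rw [hsplit, List.range_add, List.map_append, List.filter_append, h2,
    List.range_succ_eq_map]
  have h3 : ((List.range t).map F.coeff).filter (fun x => decide (x ≠ 0)) = [] := by
    rw [List.filter_eq_nil_iff]
    intro x hx
    obtain ⟨i, hi, rfl⟩ := List.mem_map.1 hx
    simp only [List.mem_range] at hi
    simp [coeff_eq_zero_of_lt_natTrailingDegree hi]
  rw [h3, List.nil_append]
  have h4 : F.coeff (t + 0) = F.trailingCoeff := by simp [trailingCoeff, ht]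
  have h5 : F.trailingCoeff ≠ 0 := trailingCoeff_nonzero_iff_nonzero.mpr hF
  simp only [List.map_cons]
  rw [List.filter_cons_of_pos (p := fun x => decide (x ≠ 0)) (by exact decide_eq_true (by rw [h4]; exact h5)), h4]
  exact ⟨_, rfl⟩

lemma coeffList_filter_getLast (F : Polynomial ℝ) (hF : F ≠ 0)
    (h : ((List.range (F.natDegree + 1)).map F.coeff).filter (fun x => decide (x ≠ 0)) ≠ []) :
    (((List.range (F.natDegree + 1)).map F.coeff).filter
      (fun x => decide (x ≠ 0))).getLast h = F.leadingCoeff := by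
  have hl : F.leadingCoeff ≠ 0 := leadingCoeff_ne_zero.mpr hF
  have key : ((List.range (F.natDegree + 1)).map F.coeff).filter (fun x => decide (x ≠ 0)) =
      (((List.range F.natDegree).map F.coeff).filter (fun x => decide (x ≠ 0)))
        ++ [F.leadingCoeff] := by
    rw [List.range_succ, List.map_append, List.filter_append]
    congr 1
    simp only [List.map_cons, List.map_nil]
    rw [List.filter_cons_of_pos (p := fun x => decide (x ≠ 0)) (by exact decide_eq_true hl)]
    rfl
  rw [List.getLast_congr _ (by simp) key]
  exact List.getLast_append_of_ne_nil _ (by simp)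

lemma even_signVar (F : Polynomial ℝ) (hF : F ≠ 0) :
    Even (signVar F) ↔ 0 < F.trailingCoeff * F.leadingCoeff := by
  obtain ⟨rest, hrest⟩ := coeffList_filter_eq F hF
  have hmem : ∀ x ∈ F.trailingCoeff :: rest, x ≠ 0 := by
    rw [← hrest]; intro x hx
    simpa using (List.mem_filter.1 hx).2
  have htr : F.trailingCoeff ≠ 0 := hmem _ (by simp)
  have h1 : signVar F = signVarList (F.trailingCoeff :: rest) := by
    rw [signVar, ← signVarList_filter, hrest]
  rw [h1, even_signVarList rest F.trailingCoeff htr (fun x hx => hmem x (List.mem_cons_of_mem _ hx))]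
  have hne : ((List.range (F.natDegree + 1)).map F.coeff).filter (fun x => decide (x ≠ 0)) ≠ [] := by
    rw [hrest]; exact List.cons_ne_nil _ _
  have h2 : (F.trailingCoeff :: rest).getLast (List.cons_ne_nil _ _) = F.leadingCoeff := by
    rw [← List.getLast_congr hne (List.cons_ne_nil _ _) hrest]
    exact coeffList_filter_getLast F hF hne
  rw [h2]

lemma no_pos_root_sign_aux (H : Polynomial ℝ) (h0 : H.eval 0 ≠ 0)
    (hpos : ∀ x : ℝ, 0 < x → H.eval x ≠ 0) (hlc : 0 < H.leadingCoeff) :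
    0 < H.eval 0 * H.leadingCoeff := by
  have hH : H ≠ 0 := fun h => h0 (by simp [h])
  by_cases hdeg : H.natDegree = 0
  · have : H = C (H.coeff 0) := eq_C_of_natDegree_eq_zero hdeg
    have h1 : H.leadingCoeff = H.eval 0 := by
      rw [leadingCoeff, hdeg, coeff_zero_eq_eval_zero]
    rw [h1]
    exact mul_self_pos.mpr h0
  · have hdeg' : 0 < H.degree := natDegree_pos_iff_degree_pos.mp (Nat.pos_of_ne_zero hdeg)
    have htop : Filter.Tendsto (fun x => H.eval x) Filter.atTop Filter.atTop :=
      H.tendsto_atTop_of_leadingCoeff_nonneg hdeg' hlc.le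
    obtain ⟨b, hb0, hbv⟩ : ∃ b : ℝ, 0 < b ∧ 0 < H.eval b := by
      have h1 := htop.eventually_gt_atTop 0
      have h2 := Filter.eventually_gt_atTop (0:ℝ)
      obtain ⟨b, hb1, hb2⟩ := (h2.and h1).exists
      exact ⟨b, hb1, hb2⟩
    have he0 : 0 < H.eval 0 := by
      rcases lt_or_gt_of_ne h0 with hneg | hposs
      · exfalso
        have hiv := intermediate_value_Ioo (le_of_lt hb0) (H.continuousOn (s := Set.Icc 0 b))
        have : (0:ℝ) ∈ Set.Ioo (H.eval 0) (H.eval b) := ⟨hneg, hbv⟩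
        obtain ⟨c, hc, hceval⟩ := hiv this
        exact hpos c hc.1 hceval
      · exact hposs
    exact mul_pos he0 hlc

lemma no_pos_root_sign (H : Polynomial ℝ) (h0 : H.eval 0 ≠ 0)
    (hpos : ∀ x : ℝ, 0 < x → H.eval x ≠ 0) :
    0 < H.eval 0 * H.leadingCoeff := by
  have hH : H ≠ 0 := fun h => h0 (by simp [h])
  rcases lt_or_gt_of_ne (leadingCoeff_ne_zero.mpr hH) with hlc | hlc
  · have := no_pos_root_sign_aux (-H) (by simpa using h0)
      (fun x hx => by simpa using hpos x hx) (by simpa using hlc)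
    simpa [neg_mul_neg] using this
  · exact no_pos_root_sign_aux H h0 hpos hlc

/-- If a nonzero real polynomial has no roots in (0, ∞), then its trailing and leading
coefficients have the same sign. -/
lemma no_pos_root_trailing_leading (G : Polynomial ℝ) (hG : G ≠ 0)
    (hpos : ∀ x : ℝ, 0 < x → G.eval x ≠ 0) :
    0 < G.trailingCoeff * G.leadingCoeff := by
  set t := G.natTrailingDegree with htdef
  have hdvd : X ^ t ∣ G := by
    rw [X_pow_dvd_iff]
    intro d hd
    exact coeff_eq_zero_of_lt_natTrailingDegree hd
  obtain ⟨G₀, hG₀⟩ := hdvd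
  have hG₀0 : G₀.eval 0 = G.trailingCoeff := by
    have : G.coeff t = G₀.coeff 0 := by
      rw [hG₀]
      simpa using (coeff_X_pow_mul G₀ t 0)
    rw [← coeff_zero_eq_eval_zero, ← this]
    rfl
  have hlead : G.leadingCoeff = G₀.leadingCoeff := by
    rw [hG₀, leadingCoeff_mul, monic_X_pow t |>.leadingCoeff, one_mul]
  have htr0 : G₀.eval 0 ≠ 0 := by
    rw [hG₀0]
    exact trailingCoeff_nonzero_iff_nonzero.mpr hG
  have hpos₀ : ∀ x : ℝ, 0 < x → G₀.eval x ≠ 0 := by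
    intro x hx hx0
    exact hpos x hx (by rw [hG₀]; simp [hx0])
  have := no_pos_root_sign G₀ htr0 hpos₀
  rwa [hG₀0, ← hlead] at this

lemma trailing_leading_sign (F : Polynomial ℝ) (hF : F ≠ 0) :
    ∃ c : ℝ, 0 < c ∧ F.trailingCoeff * F.leadingCoeff =
      (-1) ^ (Multiset.card (F.roots.filter (fun x => 0 < x))) * c := by
  classical
  set s := F.roots.filter (fun x => 0 < x) with hs
  have hs_pos : ∀ r ∈ s, 0 < r := fun r hr => (Multiset.mem_filter.1 hr).2
  set P := (s.map fun r => X - C r).prod with hP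
  have hPdvd : P ∣ F :=
    (Multiset.prod_dvd_prod_of_le (Multiset.map_le_map (Multiset.filter_le _ _))).trans
      F.prod_multiset_X_sub_C_dvd
  obtain ⟨G, hFG⟩ := hPdvd
  have hP0 : P ≠ 0 := by
    rw [hP]
    apply Multiset.prod_ne_zero
    intro h
    obtain ⟨r, _, hr⟩ := Multiset.mem_map.1 h
    exact X_sub_C_ne_zero r hr
  have hG0 : G ≠ 0 := fun h => hF (by rw [hFG, h, mul_zero])
  -- roots of P
  have hProots : P.roots = s := roots_multiset_prod_X_sub_C s
  -- G has no positive roots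
  have hGroots : (G.roots.filter (fun x => 0 < x)) = 0 := by
    have hsum : F.roots = s + G.roots := by
      rw [hFG, roots_mul (hFG ▸ hF), hProots]
    have : s = s + G.roots.filter (fun x => 0 < x) := by
      conv_lhs => rw [hs, hsum]
      rw [Multiset.filter_add]
      congr 1
      rw [Multiset.filter_eq_self]
      exact hs_pos
    have hcard := congrArg Multiset.card this
    rw [Multiset.card_add] at hcard
    rw [← Multiset.card_eq_zero]
    omega
  have hGnoroot : ∀ x : ℝ, 0 < x → G.eval x ≠ 0 := by
    intro x hx hx0
    have : x ∈ G.roots.filter (fun x => 0 < x) :=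
      Multiset.mem_filter.2 ⟨(mem_roots hG0).2 hx0, hx⟩
    rw [hGroots] at this
    exact absurd this (Multiset.notMem_zero x)
  -- trailing and leading coefficients
  have hPmonic : P.Monic := monic_multiset_prod_of_monic _ _ (fun r _ => monic_X_sub_C r)
  have hPtrail : P.trailingCoeff = (-1) ^ (Multiset.card s) * s.prod := by
    have h1 : P.trailingCoeff = (s.map fun r => (X - C r).trailingCoeff).prod := by
      rw [hP]
      induction s using Multiset.induction with
      | empty => simp [trailingCoeff]
      | cons a t ih =>
        simp only [Multiset.map_cons, Multiset.prod_cons]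
        rw [trailingCoeff_mul, ih]
    have h2 : (s.map fun r => (X - C r).trailingCoeff) = s.map fun r => -r := by
      apply Multiset.map_congr rfl
      intro r hr
      have hr0 : r ≠ 0 := ne_of_gt (hs_pos r hr)
      have hnt : (X - C r).natTrailingDegree = 0 := by
        rw [natTrailingDegree_eq_zero]
        right
        simp [hr0]
      rw [trailingCoeff, hnt]
      simp
    rw [h1, h2]
    have : (s.map fun r => -r) = s.map Neg.neg := rfl
    rw [this, Multiset.prod_map_neg]
  refine ⟨s.prod * (G.trailingCoeff * G.leadingCoeff), ?_, ?_⟩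
  · apply mul_pos (Multiset.prod_pos hs_pos)
    apply no_pos_root_trailing_leading G hG0 hGnoroot
  · rw [hFG, trailingCoeff_mul, leadingCoeff_mul, hPtrail, hPmonic.leadingCoeff]
    ring

lemma natDegree_deriv (F : Polynomial ℝ) (h : F.natDegree ≠ 0) :
    F.derivative.natDegree = F.natDegree - 1 ∧ F.derivative ≠ 0 := by
  have hF : F ≠ 0 := fun h0 => h (by simp [h0])
  have hc : F.derivative.coeff (F.natDegree - 1) ≠ 0 := by
    rw [coeff_derivative]
    have h1 : F.natDegree - 1 + 1 = F.natDegree := by omega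
    rw [h1]
    apply mul_ne_zero (leadingCoeff_ne_zero.mpr hF)
    positivity
  exact ⟨le_antisymm (natDegree_derivative_le F) (le_natDegree_of_ne_zero hc),
    fun h0 => hc (by simp [h0])⟩

lemma signVar_derivative_le (F : Polynomial ℝ) (h : F.natDegree ≠ 0) :
    signVar F.derivative ≤ signVar F := by
  obtain ⟨hnd, _⟩ := natDegree_deriv F h
  have h1 : F.derivative.natDegree + 1 = F.natDegree := by omega
  have h2 : signVar F.derivative =
      signVarList ((List.range F.natDegree).map (fun k => F.coeff (k + 1))) := by
    rw [signVar, h1]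
    apply signVarList_congr
    rw [List.forall₂_map_right_iff, List.forall₂_map_left_iff]
    apply List.forall₂_same.2
    intro k _
    rw [coeff_derivative]
    rcases lt_trichotomy (F.coeff (k + 1)) 0 with hc | hc | hc
    · exact Or.inr (Or.inl ⟨by nlinarith [Nat.cast_add_one_pos (α := ℝ) k], hc⟩)
    · exact Or.inr (Or.inr ⟨by rw [hc]; ring, hc⟩)
    · exact Or.inl ⟨by nlinarith [Nat.cast_add_one_pos (α := ℝ) k], hc⟩
  have h3 : signVar F =
      signVarList (F.coeff 0 :: (List.range F.natDegree).map (fun k => F.coeff (k + 1))) := by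
    rw [signVar, List.range_succ_eq_map, List.map_cons, List.map_map]
    rfl
  rw [h2, h3]
  exact signVarList_le_cons _ _

lemma card_pos_roots_toFinset_le (q : Polynomial ℝ) :
    (q.roots.filter (fun x => 0 < x)).toFinset.card ≤
      (((derivative q).roots.filter (fun x => 0 < x)).toFinset \
        (q.roots.filter (fun x => 0 < x)).toFinset).card + 1 := by
  classical
  rcases eq_or_ne (derivative q) 0 with hq' | hq'
  · rw [eq_C_of_derivative_eq_zero hq', roots_C]
    simp
  have hq : q ≠ 0 := ne_of_apply_ne derivative (by rwa [derivative_zero])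
  refine Finset.card_le_diff_of_interleaved fun x hx y hy hxy _ => ?_
  rw [Multiset.mem_toFinset, Multiset.mem_filter, mem_roots hq] at hx hy
  obtain ⟨z, hz1, hz2⟩ := exists_deriv_eq_zero hxy q.continuousOn (hx.1.trans hy.1.symm)
  refine ⟨z, ?_, hz1⟩
  rw [Multiset.mem_toFinset, Multiset.mem_filter, mem_roots hq']
  exact ⟨by rw [IsRoot, ← q.deriv]; exact hz2, lt_trans hx.2 hz1.1⟩

lemma card_pos_roots_le_derivative (q : Polynomial ℝ) :
    Multiset.card (q.roots.filter (fun x => 0 < x)) ≤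
      Multiset.card ((derivative q).roots.filter (fun x => 0 < x)) + 1 := by
  classical
  rcases eq_or_ne (derivative q) 0 with hq' | hq'
  · rw [eq_C_of_derivative_eq_zero hq', roots_C]
    simp
  have hq : q ≠ 0 := ne_of_apply_ne derivative (by rwa [derivative_zero])
  set m := q.roots.filter (fun x => 0 < x) with hm
  set m' := (derivative q).roots.filter (fun x => 0 < x) with hm'
  set s := m.toFinset with hsdef
  have hcount : ∀ x ∈ s, m.count x = q.rootMultiplicity x := by
    intro x hx
    have hx' := Multiset.mem_toFinset.1 hx
    have hxpos : 0 < x := (Multiset.mem_filter.1 hx').2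
    rw [hm, Multiset.count_filter, if_pos hxpos, count_roots]
  have hcount' : ∀ x, 0 < x → m'.count x = (derivative q).rootMultiplicity x := by
    intro x hxpos
    rw [hm', Multiset.count_filter, if_pos hxpos, count_roots]
  calc Multiset.card m = ∑ x ∈ s, m.count x := (Multiset.toFinset_sum_count_eq _).symm
    _ = ∑ x ∈ s, (m.count x - 1 + 1) := by
        refine Finset.sum_congr rfl fun x hx => ?_
        have : 1 ≤ m.count x := Multiset.count_pos.2 (Multiset.mem_toFinset.1 hx)
        omega
    _ = (∑ x ∈ s, (m.count x - 1)) + s.card := by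
        rw [Finset.sum_add_distrib, Finset.card_eq_sum_ones]
    _ ≤ (∑ x ∈ s, m'.count x) + ((m'.toFinset \ s).card + 1) := by
        refine add_le_add (Finset.sum_le_sum fun x hx => ?_) (card_pos_roots_toFinset_le q)
        have hxpos : 0 < x := (Multiset.mem_filter.1 (Multiset.mem_toFinset.1 hx)).2
        rw [hcount x hx, hcount' x hxpos]
        exact rootMultiplicity_sub_one_le_derivative_rootMultiplicity q x
    _ ≤ (∑ x ∈ s, m'.count x) + ((∑ x ∈ m'.toFinset \ s, m'.count x) + 1) := by
        refine add_le_add_right (add_le_add_left ?_ _) _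
        rw [Finset.card_eq_sum_ones]
        refine Finset.sum_le_sum fun x hx => ?_
        rw [Nat.succ_le_iff, Multiset.count_pos, ← Multiset.mem_toFinset]
        exact (Finset.mem_sdiff.1 hx).1
    _ ≤ Multiset.card m' + 1 := by
        rw [← add_assoc, ← Finset.sum_union Finset.disjoint_sdiff]
        refine add_le_add_left ?_ 1
        calc ∑ x ∈ s ∪ (m'.toFinset \ s), m'.count x
            ≤ ∑ x ∈ (s ∪ (m'.toFinset \ s)) ∪ m'.toFinset, m'.count x := by
              refine Finset.sum_le_sum_of_subset Finset.subset_union_left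
          _ = ∑ x ∈ m'.toFinset, m'.count x := by
              refine (Finset.sum_subset Finset.subset_union_right fun x _ hx => ?_).symm
              rw [Multiset.count_eq_zero]
              intro hmem
              exact hx (Multiset.mem_toFinset.2 hmem)
          _ = Multiset.card m' := Multiset.toFinset_sum_count_eq _


lemma signVar_parity (F : Polynomial ℝ) (hF : F ≠ 0) :
    signVar F % 2 = (Multiset.card (F.roots.filter (fun x => 0 < x))) % 2 := by
  obtain ⟨c, hc, heq⟩ := trailing_leading_sign F hF
  set p := Multiset.card (F.roots.filter (fun x => 0 < x)) with hpdef
  have hiff : Even (signVar F) ↔ Even p := by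
    rw [even_signVar F hF, heq]
    rcases Nat.even_or_odd p with h | h
    · rw [h.neg_one_pow, one_mul]
      simp [hc, h]
    · rw [h.neg_one_pow, neg_one_mul]
      constructor
      · intro h2; linarith
      · intro h2; exact absurd h2 (Nat.not_even_iff_odd.mpr h)
  rw [Nat.even_iff, Nat.even_iff] at hiff
  omega

lemma descartes_ineq (n : ℕ) : ∀ F : Polynomial ℝ, F ≠ 0 → F.natDegree ≤ n →
    Multiset.card (F.roots.filter (fun x => 0 < x)) ≤ signVar F := by
  induction n with
  | zero =>
    intro F hF hdeg
    have h0 : F.natDegree = 0 := Nat.le_zero.mp hdeg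
    rw [eq_C_of_natDegree_eq_zero h0, roots_C]
    simp
  | succ n ih =>
    intro F hF hdeg
    by_cases h0 : F.natDegree = 0
    · rw [eq_C_of_natDegree_eq_zero h0, roots_C]
      simp
    · obtain ⟨hnd, hD0⟩ := natDegree_deriv F h0
      have h1 := ih F.derivative hD0 (by omega)
      have h2 := card_pos_roots_le_derivative F
      have h3 := signVar_derivative_le F h0
      have h4 := signVar_parity F hF
      omega

end Aux

theorem stmt18 (F : Polynomial ℝ) (hF : F ≠ 0)
    (p : ℕ) (hp : p = Multiset.card (F.roots.filter (fun x => 0 < x))) :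
    p ≤ signVar F ∧ Even (signVar F - p) := by
  have hineq : p ≤ signVar F := by
    rw [hp]
    exact descartes_ineq F.natDegree F hF le_rfl
  have hpar := signVar_parity F hF
  rw [← hp] at hpar
  exact ⟨hineq, by rw [Nat.even_iff]; omega⟩
end
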